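/- arXiv:math/9812096 — 8 statements merged into one kernel-verified Lean document; each statement's English description precedes it below -/
import Mathlib

section
/- For any integers n ≥ 1, l ≥ 0, and any k with 1 ≤ k ≤ n, and any indices 1 ≤ m₁ < m₂ < ⋯ < m_k ≤ n, the sum over all tuples L = (l₁,…,l_n) of non-negative integers with l₁+⋯+l_n = l of the product l_{m₁}·l_{m₂}⋯l_{m_k} equals the binomial coefficient C(n+l-1, n+k-1). -/
/-!
Writing `l_m = C(l_m, 1)` and `1 = C(l_m, 0)`, the sum is the case `c ∈ {0, 1}ⁿ` of
`∑_L ∏ᵢ C(lᵢ, cᵢ) = C(l + n - 1, ∑ᵢ cᵢ + n - 1)`, which holds for arbitrary `c` (on generating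
functions: `∑ₐ C(a, c) xᵃ = xᶜ / (1 - x)ᶜ⁺¹`). Splitting off the first coordinate, this follows
by induction on `n` from the convolution `∑_{a+b=l} C(a, c) C(b + s, d) = C(l + s + 1, c + d + 1)`
for `s ≤ d`, which is Pascal's rule and induction on `l`.
-/

open Finset

theorem Finset.Nat.sum_antidiagonalTuple_succ {M : Type*} [AddCommMonoid M] (n l : ℕ)
    (f : (Fin (n + 1) → ℕ) → M) :
    ∑ L ∈ Nat.antidiagonalTuple (n + 1) l, f L
      = ∑ p ∈ antidiagonal l, ∑ x ∈ Nat.antidiagonalTuple n p.2, f (Fin.cons p.1 x) := by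
  rw [sum_sigma']
  refine (sum_nbij' (fun q => Fin.cons q.1.1 q.2) (fun L => ⟨(L 0, l - L 0), Fin.tail L⟩)
    ?_ ?_ ?_ ?_ ?_).symm
  · rintro ⟨⟨a, b⟩, x⟩ hq
    simp_all [Nat.mem_antidiagonalTuple, Fin.sum_cons]
  · intro L hL
    simp only [Nat.mem_antidiagonalTuple, Fin.sum_univ_succ] at hL
    simp only [mem_sigma, HasAntidiagonal.mem_antidiagonal, Nat.mem_antidiagonalTuple,
      Fin.tail]
    omega
  · rintro ⟨⟨a, b⟩, x⟩ hq
    simp only [mem_sigma, HasAntidiagonal.mem_antidiagonal] at hq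
    simp [← hq.1]
  · intro L _
    simp
  · intro _ _
    rfl

theorem Nat.sum_antidiagonal_choose_mul_add_choose {s b : ℕ} (h : s ≤ b) (l a : ℕ) :
    ∑ p ∈ antidiagonal l, p.1.choose a * (p.2 + s).choose b = (l + s + 1).choose (a + b + 1) := by
  induction l generalizing a with
  | zero =>
    rcases a with _ | a
    · rcases h.lt_or_eq with h | rfl
      · simp [Nat.choose_eq_zero_of_lt h, Nat.choose_eq_zero_of_lt (by omega : s + 1 < b + 1)]
      · simp
    · simp [Nat.choose_eq_zero_of_lt (by omega : s + 1 < a + 1 + b + 1)]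
  | succ l ih =>
    rw [Nat.sum_antidiagonal_succ, show l + 1 + s + 1 = l + s + 1 + 1 by omega]
    rcases a with _ | a
    · have := ih 0
      simp only [Nat.choose_zero_right, one_mul, zero_add] at this ⊢
      rw [this, show l + 1 + s = l + s + 1 by omega, Nat.choose_succ_succ' (l + s + 1)]
    · simp only [Nat.choose_zero_succ, zero_mul, zero_add]
      simp_rw [Nat.choose_succ_succ' _ a, add_mul, sum_add_distrib, ih]
      rw [add_right_comm a 1 b, Nat.choose_succ_succ' (l + s + 1)]

theorem Finset.Nat.sum_antidiagonalTuple_prod_choose (n l : ℕ) (c : Fin (n + 1) → ℕ) :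
    ∑ L ∈ Nat.antidiagonalTuple (n + 1) l, ∏ i, (L i).choose (c i)
      = (l + n).choose (∑ i, c i + n) := by
  induction n generalizing l with
  | zero => simp
  | succ n ih =>
    rw [Nat.sum_antidiagonalTuple_succ, Fin.sum_univ_succ]
    simp only [Fin.prod_univ_succ (n := n + 1), Fin.cons_zero, Fin.cons_succ, ← mul_sum, ih]
    rw [Nat.sum_antidiagonal_choose_mul_add_choose (by omega)]
    congr 1; omega

theorem Finset.Nat.sum_antidiagonalTuple_prod_mem (n l : ℕ) (S : Finset (Fin (n + 1))) :
    ∑ L ∈ Nat.antidiagonalTuple (n + 1) l, ∏ i ∈ S, L i = (l + n).choose (#S + n) := by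
  have hprod (L : Fin (n + 1) → ℕ) :
      ∏ i ∈ S, L i = ∏ i, (L i).choose (if i ∈ S then 1 else 0) := by
    calc ∏ i ∈ S, L i = ∏ i, if i ∈ S then L i else 1 := by rw [prod_ite_mem, univ_inter]
      _ = _ := prod_congr rfl fun i _ => by split_ifs <;> simp
  simp_rw [hprod, sum_antidiagonalTuple_prod_choose, sum_boole, filter_mem_eq_inter, univ_inter,
    Nat.cast_id]

theorem stmt0_general (n l k : ℕ) (hn : 1 ≤ n)
    (m : Fin k → Fin n) (hm : StrictMono m) :
    ∑ L ∈ Finset.Nat.antidiagonalTuple n l, ∏ i, L (m i)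
      = Nat.choose (n + l - 1) (n + k - 1) := by
  obtain ⟨n, rfl⟩ := Nat.exists_eq_add_of_le' hn
  have hprod (L : Fin (n + 1) → ℕ) : ∏ i, L (m i) = ∏ j ∈ univ.map ⟨m, hm.injective⟩, L j := by
    rw [prod_map]; rfl
  simp_rw [hprod, Nat.sum_antidiagonalTuple_prod_mem, card_map, card_univ, Fintype.card_fin]
  congr 1 <;> omega

theorem stmt0 (n l k : ℕ) (hn : 1 ≤ n) (hk : 1 ≤ k) (hkn : k ≤ n)
    (m : Fin k → Fin n) (hm : StrictMono m) :
    ∑ L ∈ Finset.Nat.antidiagonalTuple n l, ∏ i, L (m i)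
      = Nat.choose (n + l - 1) (n + k - 1) :=
  stmt0_general n l k hn m hm
end

section
/- For any integer n ≥ 1 and l ≥ 0, the sum over all tuples L = (l₁,…,l_n) of non-negative integers with l₁+⋯+l_n = l of the quantity Σ_{1 ≤ m < m' ≤ n} l_m l_{m'} equals C(n,2)·C(n+l-1, n+1). -/
/-!
Peeling one coordinate off a function `f` supported on `s` with `∑ f = n` leaves such functions
on the remaining coordinates, which are counted by multichoose numbers (stars and bars). Summing
`f i`, and then `f i * f j`, over them therefore reduces to convolutions `∑_{a+b=n} a * c b` of
binomial coefficients, evaluated by the hockey-stick identity. The result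
`∑ f i * f j = C(n + #s - 1, #s + 1)` does not depend on the pair `i ≠ j`, of which there are
`C(#s, 2)`.
-/

open Finset

namespace Nat

lemma sum_antidiagonal_multichoose (r n : ℕ) :
    ∑ p ∈ antidiagonal n, r.multichoose p.2 = (n + r).choose r := by
  rw [← Finset.Nat.sum_antidiagonal_swap]
  simpa only [Prod.snd_swap,
    Finset.Nat.sum_antidiagonal_eq_sum_range_succ (fun b _ ↦ r.multichoose b)]
    using sum_range_multichoose n r

lemma sum_antidiagonal_add_choose_succ (r n : ℕ) :
    ∑ p ∈ antidiagonal n, (p.2 + r).choose (r + 1) = (n + r + 1).choose (r + 2) := by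
  induction n with
  | zero => simp
  | succ n ih =>
    rw [Finset.Nat.sum_antidiagonal_succ, ih, add_right_comm n 1 r, choose_succ_succ' (n + r + 1)]

lemma sum_antidiagonal_mul_multichoose (r n : ℕ) :
    ∑ p ∈ antidiagonal n, p.1 * r.multichoose p.2 = (n + r).choose (r + 1) := by
  induction n with
  | zero => simp
  | succ n ih =>
    simp only [Finset.Nat.sum_antidiagonal_succ, add_mul, one_mul, sum_add_distrib, zero_mul,
      zero_add, ih, sum_antidiagonal_multichoose, add_right_comm n 1 r, choose_succ_succ' (n + r)]
    ring

lemma sum_antidiagonal_mul_add_choose_succ (r n : ℕ) :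
    ∑ p ∈ antidiagonal n, p.1 * (p.2 + r).choose (r + 1) = (n + r + 1).choose (r + 3) := by
  induction n with
  | zero => simp [choose_eq_zero_of_lt]
  | succ n ih =>
    simp only [Finset.Nat.sum_antidiagonal_succ, add_mul, one_mul, sum_add_distrib, zero_mul,
      zero_add, ih, sum_antidiagonal_add_choose_succ, add_right_comm n 1 r,
      choose_succ_succ' (n + r + 1)]
    ring

end Nat

namespace Finset

variable {ι : Type*} [DecidableEq ι]

lemma apply_eq_zero_of_mem_piAntidiag {s : Finset ι} {n : ℕ} {f : ι → ℕ} {i : ι}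
    (hf : f ∈ piAntidiag s n) (hi : i ∉ s) : f i = 0 := by
  by_contra h
  exact hi ((mem_piAntidiag.1 hf).2 i h)

lemma sum_piAntidiag_cons {M : Type*} [AddCommMonoid M] {i : ι} {s : Finset ι} (hi : i ∉ s)
    (n : ℕ) (g : (ι → ℕ) → M) :
    ∑ f ∈ piAntidiag (cons i s hi) n, g f =
      ∑ p ∈ antidiagonal n, ∑ f ∈ piAntidiag s p.2, g (f + Pi.single i p.1) := by
  rw [piAntidiag_cons, sum_disjiUnion]
  simp only [sum_map, addRightEmbedding_apply, ← Pi.single_apply]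

lemma card_piAntidiag (s : Finset ι) (n : ℕ) : #(piAntidiag s n) = (#s).multichoose n := by
  induction s using cons_induction generalizing n with
  | empty => cases n <;> simp
  | cons i s hi ih =>
    rw [card_eq_sum_ones, sum_piAntidiag_cons, card_cons, Nat.multichoose_eq]
    simp only [← card_eq_sum_ones, ih, Nat.sum_antidiagonal_multichoose]
    rw [add_right_comm, Nat.add_sub_cancel, add_comm, Nat.choose_symm_add]

lemma exists_cons_eq_of_mem {s : Finset ι} {i : ι} (hi : i ∈ s) :
    ∃ t, ∃ hit : i ∉ t, cons i t hit = s :=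
  ⟨s.erase i, notMem_erase i s, by rw [cons_eq_insert, insert_erase hi]⟩

lemma sum_piAntidiag_apply {s : Finset ι} {j : ι} (hj : j ∈ s) (n : ℕ) :
    ∑ f ∈ piAntidiag s n, f j = (n + #s - 1).choose #s := by
  obtain ⟨t, hjt, rfl⟩ := exists_cons_eq_of_mem hj
  have h_inner : ∀ p ∈ antidiagonal n, ∑ f ∈ piAntidiag t p.2, (f + Pi.single j p.1 : ι → ℕ) j
      = p.1 * (#t).multichoose p.2 := by
    intro p _
    rw [← card_piAntidiag, card_eq_sum_ones, mul_sum, mul_one]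
    refine sum_congr rfl fun f hf ↦ ?_
    simp [apply_eq_zero_of_mem_piAntidiag hf hjt]
  rw [sum_piAntidiag_cons, sum_congr rfl h_inner, Nat.sum_antidiagonal_mul_multichoose, card_cons,
    ← add_assoc, Nat.add_sub_cancel]

lemma sum_piAntidiag_mul_apply {s : Finset ι} {i j : ι} (hi : i ∈ s) (hj : j ∈ s)
    (hij : i ≠ j) (n : ℕ) :
    ∑ f ∈ piAntidiag s n, f i * f j = (n + #s - 1).choose (#s + 1) := by
  obtain ⟨t, hit, rfl⟩ := exists_cons_eq_of_mem hi
  have hjt : j ∈ t := (mem_cons.1 hj).resolve_left hij.symm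
  obtain ⟨r, hr⟩ : ∃ r, #t = r + 1 := Nat.exists_eq_succ_of_ne_zero (card_ne_zero_of_mem hjt)
  have h_inner : ∀ p ∈ antidiagonal n, ∑ f ∈ piAntidiag t p.2,
      (f + Pi.single i p.1 : ι → ℕ) i * (f + Pi.single i p.1 : ι → ℕ) j
        = p.1 * (p.2 + r).choose (r + 1) := by
    intro p _
    have hsum := sum_piAntidiag_apply hjt p.2
    rw [hr, ← add_assoc, Nat.add_sub_cancel] at hsum
    rw [← hsum, mul_sum]
    refine sum_congr rfl fun f hf ↦ ?_
    simp [apply_eq_zero_of_mem_piAntidiag hf hit, hij.symm]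
  rw [sum_piAntidiag_cons, sum_congr rfl h_inner, Nat.sum_antidiagonal_mul_add_choose_succ,
    card_cons, hr, show n + (r + 1 + 1) - 1 = n + r + 1 by omega]

end Finset

lemma Fin.card_filter_fst_lt_snd (n : ℕ) :
    #(univ.filter fun p : Fin n × Fin n ↦ p.1 < p.2) = n.choose 2 :=
  calc #(univ.filter fun p : Fin n × Fin n ↦ p.1 < p.2)
      _ = ∑ j : Fin n, (j : ℕ) := by
        rw [card_filter, Fintype.sum_prod_type, sum_comm]
        simp [filter_gt_eq_Iio]
      _ = ∑ j ∈ range n, j := Fin.sum_univ_eq_sum_range (fun j ↦ j) n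
      _ = n.choose 2 := by rw [sum_range_id, Nat.choose_two_right]

theorem stmt1_general (n l : ℕ) :
    ∑ L ∈ Finset.Nat.antidiagonalTuple n l,
      ∑ p ∈ Finset.univ.filter (fun p : Fin n × Fin n => p.1 < p.2), L p.1 * L p.2
      = Nat.choose n 2 * Nat.choose (n + l - 1) (n + 1) := by
  have hpair : ∀ p ∈ univ.filter (fun p : Fin n × Fin n ↦ p.1 < p.2),
      ∑ L ∈ piAntidiag univ l, L p.1 * L p.2 = (n + l - 1).choose (n + 1) := by
    intro p hp
    rw [sum_piAntidiag_mul_apply (mem_univ _) (mem_univ _) (mem_filter.1 hp).2.ne, card_univ,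
      Fintype.card_fin, add_comm l]
  rw [← piAntidiag_univ_fin_eq_antidiagonalTuple, sum_comm, sum_congr rfl hpair, sum_const,
    smul_eq_mul, Fin.card_filter_fst_lt_snd]

theorem stmt1 (n l : ℕ) (hn : 1 ≤ n) :
    ∑ L ∈ Finset.Nat.antidiagonalTuple n l,
      ∑ p ∈ Finset.univ.filter (fun p : Fin n × Fin n => p.1 < p.2), L p.1 * L p.2
      = Nat.choose n 2 * Nat.choose (n + l - 1) (n + 1) :=
  stmt1_general n l
end

section
/- Fix nonnegative integers n and l. For each m with 1 ≤ m ≤ n and each integer j, define mult₊^(m)(j) as the number of pairs (L, k) where L = (l₁,…,l_n) is a tuple of non-negative integers summing to l and 0 ≤ k ≤ l_m − 1, such that (l₁+⋯+l_{m−1}) − (l_{m+1}+⋯+l_n) + k = j. Then mult₊^(n)(j) equals C(n+j−1, n−1) if 0 ≤ j ≤ l−1, and equals 0 otherwise. -/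
lemma length_adt (k m : ℕ) :
    (List.Nat.antidiagonalTuple (k + 1) m).length = (m + k).choose k := by
  induction k generalizing m with
  | zero => simp
  | succ k ih =>
    rw [List.Nat.antidiagonalTuple, List.length_flatMap]
    simp only [List.Nat.antidiagonal, List.map_map, Function.comp_def, List.length_map, ih]
    have : ((List.range (m + 1)).map (fun i => ((m - i) + k).choose k)).sum
        = ∑ i ∈ Finset.range (m + 1), ((m - i) + k).choose k := rfl
    rw [this, show ∑ i ∈ Finset.range (m + 1), ((m - i) + k).choose k
        = ∑ i ∈ Finset.range (m + 1), ((m - (m + 1 - 1 - i)) + k).choose k from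
        (Finset.sum_range_reflect (fun i => ((m - i) + k).choose k) (m + 1)).symm]
    have h2 : ∀ i ∈ Finset.range (m + 1),
        ((m - (m + 1 - 1 - i)) + k).choose k = (i + k).choose k := by
      intro i hi
      rw [Finset.mem_range] at hi
      congr 2
      omega
    rw [Finset.sum_congr rfl h2, Nat.sum_range_add_choose]
    rw [show m + (k + 1) = m + k + 1 by omega]

lemma card_adt (k m : ℕ) (hk : 1 ≤ k) :
    (Finset.Nat.antidiagonalTuple k m).card = (m + k - 1).choose (k - 1) := by
  obtain ⟨k, rfl⟩ : ∃ k', k = k' + 1 := ⟨k - 1, by omega⟩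
  have : (Finset.Nat.antidiagonalTuple (k + 1) m).card
      = (List.Nat.antidiagonalTuple (k + 1) m).length := rfl
  rw [this, length_adt, show m + (k + 1) - 1 = m + k by omega, show k + 1 - 1 = k by omega]

theorem stmt2 (n l : ℕ) (hn : 1 ≤ n) (j : ℤ) :
    (((Finset.Nat.antidiagonalTuple n l) ×ˢ Finset.range l).filter
      (fun P : (Fin n → ℕ) × ℕ => P.2 < P.1 ⟨n - 1, by omega⟩ ∧
        (∑ i ∈ Finset.univ.filter (fun i : Fin n => (i : ℕ) < n - 1), (P.1 i : ℤ))
          + (P.2 : ℤ) = j)).card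
      = if 0 ≤ j ∧ j ≤ (l : ℤ) - 1 then Nat.choose (n + j.toNat - 1) (n - 1) else 0 := by
  have hlt : n - 1 < n := by omega
  set last : Fin n := ⟨n - 1, hlt⟩ with hlastdef
  have hfilter : Finset.univ.filter (fun i : Fin n => (i : ℕ) < n - 1)
      = Finset.univ.erase last := by
    ext i
    simp only [Finset.mem_filter, Finset.mem_univ, true_and, Finset.mem_erase, and_true,
      Ne, Fin.ext_iff, hlastdef]
    have := i.isLt
    omega
  -- key fact: for tuples summing to l, the partial (integer) sum equals l - L last
  have key : ∀ L : Fin n → ℕ, ∑ i, L i = l →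
      (L last : ℤ) + ∑ i ∈ Finset.univ.erase last, (L i : ℤ) = (l : ℤ) := by
    intro L hL
    have h2 := Finset.add_sum_erase Finset.univ L (Finset.mem_univ last)
    rw [hL] at h2
    exact_mod_cast congrArg (Nat.cast : ℕ → ℤ) h2
  by_cases hj : 0 ≤ j ∧ j ≤ (l : ℤ) - 1
  · rw [if_pos hj]
    have hcard := card_adt n j.toNat hn
    rw [show n + j.toNat - 1 = j.toNat + n - 1 by omega, ← hcard]
    have htoNat : (j.toNat : ℤ) = j := Int.toNat_of_nonneg hj.1
    have hjl : j.toNat < l := by omega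
    refine Finset.card_bij'
      (fun P _ => Function.update P.1 last P.2)
      (fun M _ => (Function.update M last (l - j.toNat + M last), M last))
      ?hi ?hj ?left ?right
    case hi =>
      rintro ⟨L, k⟩ hP
      rw [Finset.mem_filter, Finset.mem_product, Finset.Nat.mem_antidiagonalTuple,
        Finset.mem_range] at hP
      obtain ⟨⟨hL, hk⟩, hklt, hs⟩ := hP
      dsimp only at hL hk hklt hs ⊢
      rw [hfilter] at hs
      rw [Finset.Nat.mem_antidiagonalTuple, Finset.sum_update_of_mem (Finset.mem_univ last),
        ← Finset.erase_eq]
      have hkey := key L hL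
      have : ((k + ∑ i ∈ Finset.univ.erase last, L i : ℕ) : ℤ) = (j.toNat : ℤ) := by
        push_cast
        rw [htoNat]
        linarith
      exact_mod_cast this
    case hj =>
      rintro M hM
      rw [Finset.Nat.mem_antidiagonalTuple] at hM
      have hMlast : M last ≤ j.toNat := hM ▸ Finset.single_le_sum
        (fun i _ => Nat.zero_le (M i)) (Finset.mem_univ last)
      have hMsum := Finset.add_sum_erase Finset.univ M (Finset.mem_univ last)
      rw [hM] at hMsum
      rw [Finset.mem_filter, Finset.mem_product, Finset.Nat.mem_antidiagonalTuple,
        Finset.mem_range]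
      have hupd : ∀ i ∈ Finset.univ.erase last,
          Function.update M last (l - j.toNat + M last) i = M i := by
        intro i hi
        exact Function.update_of_ne (Finset.ne_of_mem_erase hi) _ _
      refine ⟨⟨?_, by omega⟩, ?_, ?_⟩
      · rw [Finset.sum_update_of_mem (Finset.mem_univ last), ← Finset.erase_eq,
        ]
        omega
      · simp only [Function.update_self]
        omega
      · rw [hfilter]
        rw [Finset.sum_congr rfl (fun i hi => by
          rw [hupd i hi] : ∀ i ∈ Finset.univ.erase last,
            ((Function.update M last (l - j.toNat + M last) i : ℕ) : ℤ) = (M i : ℤ))]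
        simp only [Function.update_self]
        have : ((M last + ∑ i ∈ Finset.univ.erase last, M i : ℕ) : ℤ) = (j.toNat : ℤ) := by
          exact_mod_cast congrArg (Nat.cast : ℕ → ℤ) hMsum
        push_cast at this
        push_cast
        omega
    case left =>
      rintro ⟨L, k⟩ hP
      rw [Finset.mem_filter, Finset.mem_product, Finset.Nat.mem_antidiagonalTuple,
        Finset.mem_range] at hP
      obtain ⟨⟨hL, hk⟩, hklt, hs⟩ := hP
      dsimp only at hL hk hklt hs ⊢
      rw [hfilter] at hs
      have hkey := key L hL
      have hLlast : L last = l - j.toNat + k := by omega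
      simp only [Function.update_self, Function.update_idem]
      rw [← hLlast, Function.update_eq_self]
    case right =>
      rintro M hM
      dsimp only
      simp only [Function.update_idem, Function.update_self, Function.update_eq_self]
  · rw [if_neg hj]
    rw [Finset.card_eq_zero, Finset.filter_eq_empty_iff]
    rintro ⟨L, k⟩ hP
    rw [Finset.mem_product, Finset.Nat.mem_antidiagonalTuple, Finset.mem_range] at hP
    obtain ⟨hL, hk⟩ := hP
    rintro ⟨hklt, hs⟩
    dsimp only at hL hk hklt hs
    rw [hfilter] at hs
    have hkey := key L hL
    have hnn : (0 : ℤ) ≤ ∑ i ∈ Finset.univ.erase last, (L i : ℤ) :=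
      Finset.sum_nonneg fun i _ => Int.natCast_nonneg _
    omega
end

section
/- Fix nonnegative integers n, l and 1 ≤ m ≤ n−1. Define mult₊^(m)(j) as the number of pairs (L, k) with L = (l₁,…,l_n) ∈ ℤ_{≥0}ⁿ, Σ l_i = l, 0 ≤ k ≤ l_m − 1, and (Σ_{i<m} l_i − Σ_{i>m} l_i) + k = j; define mult₋^(m+1)(j) analogously with m replaced by m+1 and +k replaced by −k, i.e., counting pairs with (Σ_{i<m+1} l_i − Σ_{i>m+1} l_i) − k = j, 0 ≤ k ≤ l_{m+1} − 1. Then mult₊^(m)(j) = mult₋^(m+1)(j) for all integers j. -/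
/-!
The two sets of lattice points correspond under `(L, k) ↦ (L', l_{m+1})`, where `L'` agrees
with `L` except that `l'_m = k` and `l'_{m+1} = l_m + l_{m+1} - k`; the inverse is the same map
with `m` and `m + 1` exchanged. It preserves `∑ lᵢ`, turns `k < l_m` into `l_{m+1} < l'_{m+1}`,
and since `l̃_{m+1}` does not depend on `l_{m+1}` and `l̃_{m+1} = l̃_m + l_m + l_{m+1}`, it sends
`l̃_m + k` to `l̃'_{m+1} - l_{m+1}`.
-/

open Finset Function

section SumOffPair

variable {ι M : Type*} [Fintype ι] [DecidableEq ι] [AddCommMonoid M] {a b : ι}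

theorem Finset.sum_eq_sum_of_eq_off_pair {f g : ι → M} (hab : a ≠ b)
    (hoff : ∀ i, i ≠ a → i ≠ b → f i = g i) (hpair : f a + f b = g a + g b) :
    ∑ i, f i = ∑ i, g i := by
  rw [← sum_add_sum_compl {a, b} f, ← sum_add_sum_compl {a, b} g, sum_pair hab, sum_pair hab,
    hpair]
  congr 1
  refine sum_congr rfl fun i hi => ?_
  simp only [mem_compl, mem_insert, mem_singleton, not_or] at hi
  exact hoff i hi.1 hi.2

theorem Finset.add_le_sum_of_ne (f : ι → ℕ) (hab : a ≠ b) : f a + f b ≤ ∑ i, f i := by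
  rw [← sum_pair hab]
  exact sum_le_sum_of_subset (subset_univ _)

end SumOffPair

namespace Multiplicity

variable {n : ℕ}

/-- The paper's `l̃_a`. -/
def balance (a : Fin n) (L : Fin n → ℕ) : ℤ :=
  ∑ i ∈ univ.filter (· < a), (L i : ℤ) - ∑ i ∈ univ.filter (a < ·), (L i : ℤ)

def multPlus (n l : ℕ) (a : Fin n) (j : ℤ) : Finset ((Fin n → ℕ) × ℕ) :=
  (Nat.antidiagonalTuple n l ×ˢ range l).filter fun P => P.2 < P.1 a ∧ balance a P.1 + P.2 = j

def multMinus (n l : ℕ) (a : Fin n) (j : ℤ) : Finset ((Fin n → ℕ) × ℕ) :=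
  (Nat.antidiagonalTuple n l ×ˢ range l).filter fun P => P.2 < P.1 a ∧ balance a P.1 - P.2 = j

theorem balance_update_self (a : Fin n) (L : Fin n → ℕ) (x : ℕ) :
    balance a (update L a x) = balance a L := by
  unfold balance
  congr 1 <;> refine sum_congr rfl fun i hi => ?_ <;>
    rw [update_of_ne (by rintro rfl; simp at hi)]

theorem balance_of_val_eq_succ {a b : Fin n} (hab : (b : ℕ) = a + 1) (L : Fin n → ℕ) :
    balance b L = balance a L + L a + L b := by
  have hlt : univ.filter (· < b) = insert a (univ.filter (· < a)) := by
    ext i; simp only [mem_filter, mem_univ, true_and, mem_insert, Fin.lt_def, Fin.ext_iff]; omega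
  have hgt : univ.filter (a < ·) = insert b (univ.filter (b < ·)) := by
    ext i; simp only [mem_filter, mem_univ, true_and, mem_insert, Fin.lt_def, Fin.ext_iff]; omega
  unfold balance
  rw [hlt, hgt, sum_insert (by simp), sum_insert (by simp)]
  ring

def transfer (a b : Fin n) (P : (Fin n → ℕ) × ℕ) : (Fin n → ℕ) × ℕ :=
  (update (update P.1 a P.2) b (P.1 a + P.1 b - P.2), P.1 b)

variable {a b : Fin n}

theorem sum_transfer (hab : a ≠ b) {L : Fin n → ℕ} {k : ℕ} (hk : k ≤ L a + L b) :
    ∑ i, (transfer a b (L, k)).1 i = ∑ i, L i := by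
  refine sum_eq_sum_of_eq_off_pair hab (fun i hia hib => ?_) ?_
  · simp [transfer, update_of_ne hia, update_of_ne hib]
  · simp only [transfer, update_self, update_of_ne hab]
    omega

theorem transfer_transfer (hab : a ≠ b) {P : (Fin n → ℕ) × ℕ} (hP : P.2 ≤ P.1 a + P.1 b) :
    transfer b a (transfer a b P) = P := by
  obtain ⟨L, k⟩ := P
  ext i
  · simp only [transfer, update_apply]
    split_ifs <;> simp_all
  · simp [transfer, update_of_ne hab]

theorem transfer_mem_multMinus (hab : (b : ℕ) = a + 1) {l : ℕ} {j : ℤ}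
    {L : Fin n → ℕ} {k : ℕ} (hP : (L, k) ∈ multPlus n l a j) :
    transfer a b (L, k) ∈ multMinus n l b j := by
  have hne : a ≠ b := by rw [Ne, Fin.ext_iff]; omega
  simp only [multPlus, multMinus, mem_filter, mem_product, Nat.mem_antidiagonalTuple,
    mem_range] at hP ⊢
  obtain ⟨⟨hL, -⟩, hk, hj⟩ := hP
  have hpair := add_le_sum_of_ne L hne
  refine ⟨⟨(sum_transfer hne (by omega)).trans hL, by simp only [transfer]; omega⟩, ?_, ?_⟩
  · simp only [transfer, update_self]
    omega
  · simp only [transfer]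
    rw [balance_update_self, balance_of_val_eq_succ hab, balance_update_self,
      update_self, update_of_ne hne.symm]
    omega

theorem transfer_mem_multPlus (hab : (b : ℕ) = a + 1) {l : ℕ} {j : ℤ}
    {L : Fin n → ℕ} {k : ℕ} (hP : (L, k) ∈ multMinus n l b j) :
    transfer b a (L, k) ∈ multPlus n l a j := by
  have hne : b ≠ a := by rw [Ne, Fin.ext_iff]; omega
  simp only [multPlus, multMinus, mem_filter, mem_product, Nat.mem_antidiagonalTuple,
    mem_range] at hP ⊢
  obtain ⟨⟨hL, -⟩, hk, hj⟩ := hP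
  have hpair := add_le_sum_of_ne L hne
  refine ⟨⟨(sum_transfer hne (by omega)).trans hL, by simp only [transfer]; omega⟩, ?_, ?_⟩
  · simp only [transfer, update_self]
    omega
  · have hsucc := balance_of_val_eq_succ hab (update L b k)
    rw [balance_update_self, update_self, update_of_ne hne.symm] at hsucc
    simp only [transfer]
    rw [balance_update_self]
    omega

theorem card_multPlus_eq_card_multMinus (hab : (b : ℕ) = a + 1) (l : ℕ) (j : ℤ) :
    (multPlus n l a j).card = (multMinus n l b j).card := by
  have hne : a ≠ b := by rw [Ne, Fin.ext_iff]; omega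
  exact card_nbij' (transfer a b) (transfer b a) (fun _ hP => transfer_mem_multMinus hab hP)
    (fun _ hP => transfer_mem_multPlus hab hP)
    (fun _ hP => transfer_transfer hne ((mem_filter.mp hP).2.1.le.trans le_self_add))
    (fun _ hP => transfer_transfer hne.symm ((mem_filter.mp hP).2.1.le.trans le_self_add))

end Multiplicity

theorem stmt3 (n l : ℕ) (a : Fin n) (ha : (a : ℕ) + 1 < n) (j : ℤ) :
    (((Finset.Nat.antidiagonalTuple n l) ×ˢ Finset.range l).filter
      (fun P : (Fin n → ℕ) × ℕ => P.2 < P.1 a ∧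
        (∑ i ∈ Finset.univ.filter (fun i : Fin n => i < a), (P.1 i : ℤ))
          - (∑ i ∈ Finset.univ.filter (fun i : Fin n => a < i), (P.1 i : ℤ))
          + (P.2 : ℤ) = j)).card
    = (((Finset.Nat.antidiagonalTuple n l) ×ˢ Finset.range l).filter
      (fun P : (Fin n → ℕ) × ℕ => P.2 < P.1 ⟨(a : ℕ) + 1, ha⟩ ∧
        (∑ i ∈ Finset.univ.filter (fun i : Fin n => i < (⟨(a : ℕ) + 1, ha⟩ : Fin n)), (P.1 i : ℤ))
          - (∑ i ∈ Finset.univ.filter (fun i : Fin n => (⟨(a : ℕ) + 1, ha⟩ : Fin n) < i), (P.1 i : ℤ))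
          - (P.2 : ℤ) = j)).card :=
  Multiplicity.card_multPlus_eq_card_multMinus (b := ⟨(a : ℕ) + 1, ha⟩) rfl l j
end

section
/- Let q be a nonzero complex number that is not a root of unity, and let [n]_q = (qⁿ − q⁻ⁿ)/(q − q⁻¹). Then for any positive integer l and complex numbers α₁,…,α_l and a parameter ρ with the substitution a_j = exp(2π α_j/ρ): the skew-symmetrization (1/l!) Σ_{σ ∈ S_l} sgn(σ) Π_{1≤j<j'≤l} sinh(π(α_{σ(j')} − α_{σ(j)} − πi)/ρ) equals ([l]_q!/l!) Π_{1≤j<j'≤l} sinh(π(α_{j'} − α_j)/ρ), where q = exp(−π²i/ρ) and [l]_q! = Π_{m=1}^{l} [m]_q. -/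
/-!
Put `A_j = π α_j / ρ` and `b_j = exp (2 A_j)`. Then
`sinh (A_k - A_j - π² I / ρ) = exp (-A_j) exp (-A_k) (q b_k - q⁻¹ b_j) / 2`, and the prefactors
form a symmetric product over the pairs, so the claim reduces to the polynomial identity
`∑_σ sgn σ ∏_{j<k} (q b_{σ k} - q⁻¹ b_{σ j}) = [l]_q! ∏_{j<k} (b_k - b_j)`.
Expanding the product, the left side is a linear combination of alternants `det (b_i ^ d_j)` whose
exponents are all `< l`; such an alternant is `0` or `± det (vandermonde b)`, so the left side is
`c · det (vandermonde b)` for a constant `c`. At the geometric progression `b_k = q^(2k)` every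
term with `σ ≠ 1` has a vanishing factor, and the remaining product telescopes to `c = [l]_q!`.
-/

open Finset Equiv Matrix

theorem Finset.prod_comp_eq_prod_pow_card {ι κ M : Type*} [CommMonoid M] [Fintype κ] [DecidableEq κ]
    (s : Finset ι) (g : ι → κ) (f : κ → M) :
    ∏ a ∈ s, f (g a) = ∏ b, f b ^ #{a ∈ s | g a = b} := by
  rw [← prod_fiberwise s g]
  refine prod_congr rfl fun b _ => ?_
  rw [prod_congr rfl fun a ha => congrArg f (mem_filter.1 ha).2, prod_const]

section Alternant

variable {R : Type*} [CommRing R] {l : ℕ}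

theorem Matrix.exists_det_of_pow_eq_mul_det_vandermonde (d : Fin l → ℕ) (hd : ∀ i, d i < l) :
    ∃ c : ℤ, ∀ b : Fin l → R, (of fun i j => b i ^ d j).det = c * (vandermonde b).det := by
  by_cases hinj : Function.Injective d
  · let τ : Perm (Fin l) := Equiv.ofBijective (fun i => ⟨d i, hd i⟩)
      (Finite.injective_iff_bijective.1 fun i j h => hinj (congrArg Fin.val h))
    refine ⟨Perm.sign τ, fun b => ?_⟩
    rw [← det_permute']
    rfl
  · obtain ⟨i, j, hij, hne⟩ : ∃ i j, d i = d j ∧ i ≠ j := by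
      simpa [Function.Injective] using hinj
    exact ⟨0, fun b => by rw [det_zero_of_column_eq hne fun k => by simp [hij]]; simp⟩

theorem Matrix.sum_sign_mul_prod_pow_eq_det (d : Fin l → ℕ) (b : Fin l → R) :
    ∑ σ : Perm (Fin l), (Perm.sign σ : ℤ) * ∏ i, b (σ i) ^ d i = (of fun i j => b i ^ d j).det := by
  simp [det_apply, Units.smul_def]

theorem exists_sum_sign_mul_prod_add_eq_mul_det_vandermonde {ι : Type*} [DecidableEq ι]
    (s : Finset ι) (u v : ι → Fin l) (x y : ι → R)
    (hs : ∀ i, #{p ∈ s | u p = i ∨ v p = i} < l) :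
    ∃ c : R, ∀ b : Fin l → R, ∑ σ : Perm (Fin l), (Perm.sign σ : ℤ) *
      ∏ p ∈ s, (x p * b (σ (u p)) + y p * b (σ (v p))) = c * (vandermonde b).det := by
  -- the term of the expansion indexed by `S` takes `b (σ (e S p))` from the factor `p`
  let e (S : Finset ι) (p : ι) : Fin l := if p ∈ S then u p else v p
  let d (S : Finset ι) (i : Fin l) : ℕ := #{p ∈ s | e S p = i}
  have hd : ∀ S i, d S i < l := fun S i => (card_le_card fun p => by
    simp only [mem_filter, e]; split_ifs <;> tauto).trans_lt (hs i)
  choose c hc using fun S => exists_det_of_pow_eq_mul_det_vandermonde (R := R) (d S) (hd S)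
  refine ⟨∑ S ∈ s.powerset, ((∏ p ∈ S, x p) * ∏ p ∈ s \ S, y p) * c S, fun b => ?_⟩
  have hexpand : ∀ σ : Perm (Fin l), ∏ p ∈ s, (x p * b (σ (u p)) + y p * b (σ (v p))) =
      ∑ S ∈ s.powerset, ((∏ p ∈ S, x p) * ∏ p ∈ s \ S, y p) * ∏ i, b (σ i) ^ d S i := by
    intro σ
    set B : Fin l → R := fun i => b (σ i)
    rw [prod_add]
    refine sum_congr rfl fun S hS => ?_
    have hu : ∏ p ∈ S, B (e S p) = ∏ p ∈ S, B (u p) :=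
      prod_congr rfl fun p hp => by simp [e, hp]
    have hv : ∏ p ∈ s \ S, B (e S p) = ∏ p ∈ s \ S, B (v p) :=
      prod_congr rfl fun p hp => by simp [e, (mem_sdiff.1 hp).2]
    rw [← prod_comp_eq_prod_pow_card s (e S) B, ← prod_sdiff (mem_powerset.1 hS), hu, hv,
      prod_mul_distrib, prod_mul_distrib]
    ring
  calc ∑ σ : Perm (Fin l), (Perm.sign σ : ℤ) * ∏ p ∈ s, (x p * b (σ (u p)) + y p * b (σ (v p)))
      = ∑ S ∈ s.powerset, ((∏ p ∈ S, x p) * ∏ p ∈ s \ S, y p) *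
          ∑ σ : Perm (Fin l), (Perm.sign σ : ℤ) * ∏ i, b (σ i) ^ d S i := by
        simp_rw [hexpand, mul_sum]
        rw [sum_comm]
        refine sum_congr rfl fun S _ => sum_congr rfl fun σ _ => ?_
        ring
    _ = _ := by
        simp_rw [sum_sign_mul_prod_pow_eq_det, hc, sum_mul, mul_assoc]

end Alternant

def ltPairs (l : ℕ) : Finset (Fin l × Fin l) := univ.filter fun p => p.1 < p.2

section ltPairs
variable {l : ℕ} {M : Type*} [CommMonoid M]

@[simp] theorem mem_ltPairs {p : Fin l × Fin l} : p ∈ ltPairs l ↔ p.1 < p.2 := by simp [ltPairs]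

theorem card_filter_ltPairs_fst_eq (i : Fin l) : #{p ∈ ltPairs l | p.1 = i} = l - 1 - i := by
  rw [← Fin.card_Ioi]
  refine card_nbij' Prod.snd (fun j => (i, j)) ?_ ?_ ?_ ?_ <;> intro p <;>
    aesop (add simp Prod.ext_iff)

theorem card_filter_ltPairs_snd_eq (i : Fin l) : #{p ∈ ltPairs l | p.2 = i} = i := by
  rw [← Fin.card_Iio]
  refine card_nbij' Prod.fst (fun j => (j, i)) ?_ ?_ ?_ ?_ <;> intro p <;>
    aesop (add simp Prod.ext_iff)

theorem card_filter_ltPairs_snd_or_fst_lt (i : Fin l) :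
    #{p ∈ ltPairs l | p.2 = i ∨ p.1 = i} < l := by
  rw [filter_or]
  have := card_union_le {p ∈ ltPairs l | p.2 = i} {p ∈ ltPairs l | p.1 = i}
  rw [card_filter_ltPairs_fst_eq, card_filter_ltPairs_snd_eq] at this
  omega

theorem prod_ltPairs_mul (g : Fin l → M) :
    ∏ p ∈ ltPairs l, g p.1 * g p.2 = ∏ i, g i ^ (l - 1) := by
  rw [prod_mul_distrib, prod_comp_eq_prod_pow_card _ Prod.fst,
    prod_comp_eq_prod_pow_card _ Prod.snd, ← prod_mul_distrib]
  refine prod_congr rfl fun i _ => ?_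
  rw [← pow_add, card_filter_ltPairs_fst_eq, card_filter_ltPairs_snd_eq]
  congr 1
  omega

theorem prod_ltPairs_mul_comp_perm (g : Fin l → M) (σ : Perm (Fin l)) :
    ∏ p ∈ ltPairs l, g (σ p.1) * g (σ p.2) = ∏ p ∈ ltPairs l, g p.1 * g p.2 := by
  rw [prod_ltPairs_mul (fun i => g (σ i)), prod_ltPairs_mul, prod_comp σ (fun i => g i ^ (l - 1))]

theorem prod_ltPairs_eq_prod_prod_Ioi (f : Fin l × Fin l → M) :
    ∏ p ∈ ltPairs l, f p = ∏ i, ∏ j ∈ Ioi i, f (i, j) := by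
  simp_rw [ltPairs, prod_filter, Fintype.prod_prod_type, ← filter_lt_eq_Ioi, prod_filter]

theorem prod_ltPairs_eq_prod_range (f : ℕ → ℕ → M) :
    ∏ p ∈ ltPairs l, f p.1 p.2 = ∏ j ∈ range l, ∏ i ∈ range j, f i j := by
  rw [ltPairs, prod_filter, Fintype.prod_prod_type, prod_comm]
  simp only [Fin.lt_def]
  rw [Fin.prod_univ_eq_prod_range (fun j => ∏ i : Fin l, if (i : ℕ) < j then f i j else 1)]
  refine prod_congr rfl fun j hj => ?_
  rw [Fin.prod_univ_eq_prod_range (fun i => if i < j then f i j else 1), ← prod_filter]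
  congr 1
  ext i
  simp only [mem_filter, mem_range] at hj ⊢
  omega

end ltPairs

theorem Matrix.det_vandermonde_eq_prod_ltPairs {R : Type*} [CommRing R] {l : ℕ} (b : Fin l → R) :
    (vandermonde b).det = ∏ p ∈ ltPairs l, (b p.2 - b p.1) := by
  rw [det_vandermonde, prod_ltPairs_eq_prod_prod_Ioi]

theorem Equiv.Perm.exists_lt_val_eq_succ_of_ne_one {l : ℕ} {σ : Perm (Fin l)} (hσ : σ ≠ 1) :
    ∃ i j : Fin l, i < j ∧ (σ i : ℕ) = σ j + 1 := by
  by_contra! h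
  apply hσ
  obtain _ | n := l
  · exact Subsingleton.elim _ _
  have hmono : StrictMono ⇑σ⁻¹ := Fin.strictMono_iff_lt_succ.2 fun k => by
    refine (lt_or_gt_of_ne fun he => ?_).resolve_right fun hlt => h _ _ hlt ?_
    · exact Fin.castSucc_lt_succ.ne (σ⁻¹.injective he)
    · simp
  rw [← inv_eq_one]
  exact Equiv.ext fun x => le_antisymm hmono.apply_le hmono.le_apply

section QNumbers
variable {K : Type*} [Field K] {q : K}

theorem prod_range_qsub_mul (hq : q ≠ 0) (l : ℕ) :
    (∏ i ∈ range l, (q * q ^ (2 * l) - q⁻¹ * q ^ (2 * i))) * (q - q⁻¹) =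
      (q ^ (l + 1) - q⁻¹ ^ (l + 1)) * ∏ i ∈ range l, (q ^ (2 * l) - q ^ (2 * i)) := by
  let g (i : ℕ) : K := q ^ (l + 1 - i) - q⁻¹ ^ (l + 1 - i)
  have hfactor : ∀ i ∈ range l, q * q ^ (2 * l) - q⁻¹ * q ^ (2 * i) = q ^ (l + i) * g i ∧
      q ^ (2 * l) - q ^ (2 * i) = q ^ (l + i) * g (i + 1) := by
    intro i hi
    obtain ⟨n, rfl⟩ := Nat.exists_eq_add_of_lt (mem_range.1 hi)
    simp only [g, show i + n + 1 + 1 - i = n + 2 by omega,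
      show i + n + 1 + 1 - (i + 1) = n + 1 by omega, inv_pow]
    constructor <;> field_simp <;> ring
  have htele : (∏ i ∈ range l, g i) * g l = (∏ i ∈ range l, g (i + 1)) * g 0 :=
    (prod_range_succ g l).symm.trans (prod_range_succ' g l)
  simp only [g, Nat.sub_zero, Nat.add_sub_cancel_left, pow_one] at htele
  rw [prod_congr rfl fun i hi => (hfactor i hi).1, prod_congr rfl fun i hi => (hfactor i hi).2,
    prod_mul_distrib, prod_mul_distrib]
  simp only [g]
  linear_combination (∏ i ∈ range l, q ^ (l + i)) * htele

theorem prod_range_prod_range_qsub (hq : q ≠ 0) (hq1 : q - q⁻¹ ≠ 0) (l : ℕ) :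
    ∏ j ∈ range l, ∏ i ∈ range j, (q * q ^ (2 * j) - q⁻¹ * q ^ (2 * i)) =
      (∏ m ∈ Icc 1 l, (q ^ m - q⁻¹ ^ m) / (q - q⁻¹)) *
        ∏ j ∈ range l, ∏ i ∈ range j, (q ^ (2 * j) - q ^ (2 * i)) := by
  induction l with
  | zero => simp
  | succ l ih =>
    have hrow : ∏ i ∈ range l, (q * q ^ (2 * l) - q⁻¹ * q ^ (2 * i)) =
        (q ^ (l + 1) - q⁻¹ ^ (l + 1)) / (q - q⁻¹) * ∏ i ∈ range l, (q ^ (2 * l) - q ^ (2 * i)) := by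
      rw [div_mul_eq_mul_div, eq_div_iff hq1, prod_range_qsub_mul hq]
    rw [prod_range_succ, prod_range_succ, prod_Icc_succ_top (by omega), ih, hrow]
    ring

end QNumbers

theorem sum_sign_mul_prod_ltPairs_eq_prod {R : Type*} [CommRing R] {l : ℕ} (g : Fin l → Fin l → R)
    (hg : ∀ i j : Fin l, (i : ℕ) = j + 1 → g i j = 0) :
    ∑ σ : Perm (Fin l), (Perm.sign σ : ℤ) * ∏ p ∈ ltPairs l, g (σ p.1) (σ p.2) =
      ∏ p ∈ ltPairs l, g p.1 p.2 := by
  rw [sum_eq_single 1 (fun σ _ hσ => ?_) (by simp)]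
  · simp
  obtain ⟨i, j, hij, h⟩ := Perm.exists_lt_val_eq_succ_of_ne_one hσ
  rw [prod_eq_zero (i := (i, j)) (by simpa) (hg _ _ h), mul_zero]

theorem sum_sign_mul_prod_ltPairs_qsub {K : Type*} [Field K] {l : ℕ} {q : K} (hq0 : q ≠ 0)
    (hq : ¬IsOfFinOrder q) (b : Fin l → K) :
    ∑ σ : Perm (Fin l), (Perm.sign σ : ℤ) * ∏ p ∈ ltPairs l, (q * b (σ p.2) - q⁻¹ * b (σ p.1)) =
      (∏ m ∈ Icc 1 l, (q ^ m - q⁻¹ ^ m) / (q - q⁻¹)) * ∏ p ∈ ltPairs l, (b p.2 - b p.1) := by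
  obtain ⟨c, hc⟩ := exists_sum_sign_mul_prod_add_eq_mul_det_vandermonde (ltPairs l) Prod.snd
    Prod.fst (fun _ => q) (fun _ => -q⁻¹) card_filter_ltPairs_snd_or_fst_lt
  simp_rw [neg_mul, ← sub_eq_add_neg, det_vandermonde_eq_prod_ltPairs] at hc
  rw [hc]
  congr 1
  have hq1 : q - q⁻¹ ≠ 0 := fun h => hq <| isOfFinOrder_iff_pow_eq_one.2
    ⟨2, two_pos, by field_simp at h; linear_combination h⟩
  let w : Fin l → K := fun k => q ^ (2 * (k : ℕ))
  have hpow : Function.Injective (q ^ · : ℕ → K) := by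
    have := (injective_pow_iff_not_isOfFinOrder (x := Units.mk0 q hq0)).2
      (by rwa [← Units.isOfFinOrder_val])
    exact fun a b h => this (Units.ext (by simpa using h))
  have hw : Function.Injective w := fun i j h => Fin.ext <| by
    have := hpow h
    omega
  have hV : ∏ p ∈ ltPairs l, (w p.2 - w p.1) ≠ 0 := by
    rw [← det_vandermonde_eq_prod_ltPairs]
    exact det_vandermonde_ne_zero_iff.2 hw
  have hvanish (i j : Fin l) (h : (i : ℕ) = j + 1) : q * w j - q⁻¹ * w i = 0 := by
    simp only [w, h]
    field_simp
    ring
  refine mul_right_cancel₀ hV ?_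
  rw [← hc w, sum_sign_mul_prod_ltPairs_eq_prod (fun i j => q * w j - q⁻¹ * w i) hvanish,
    prod_ltPairs_eq_prod_range (fun i j => q * q ^ (2 * j) - q⁻¹ * q ^ (2 * i)),
    prod_ltPairs_eq_prod_range (fun i j => q ^ (2 * j) - q ^ (2 * i)),
    prod_range_prod_range_qsub hq0 hq1]

open Complex Real

theorem Complex.sinh_sub_sub (x y t : ℂ) :
    sinh (y - x - t) =
      exp (-x) * exp (-y) * 2⁻¹ * (exp (-t) * exp y ^ 2 - (exp (-t))⁻¹ * exp x ^ 2) := by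
  simp only [Complex.sinh, exp_sub, exp_neg]
  field_simp

theorem stmt4_general (l : ℕ) (ρ : ℂ) (α : Fin l → ℂ)
    (q : ℂ) (hq : q = Complex.exp (-(Real.pi : ℂ) ^ 2 * Complex.I / ρ))
    (hroot : ∀ k : ℕ, 0 < k → q ^ k ≠ 1) :
    (1 / (l.factorial : ℂ)) * ∑ σ : Equiv.Perm (Fin l), (Equiv.Perm.sign σ : ℤ) *
      ∏ p ∈ Finset.univ.filter (fun p : Fin l × Fin l => p.1 < p.2),
        Complex.sinh ((Real.pi : ℂ) * (α (σ p.2) - α (σ p.1) - Real.pi * Complex.I) / ρ)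
    = ((∏ m ∈ Finset.Icc 1 l, ((q ^ m - q⁻¹ ^ m) / (q - q⁻¹))) / (l.factorial : ℂ)) *
      ∏ p ∈ Finset.univ.filter (fun p : Fin l × Fin l => p.1 < p.2),
        Complex.sinh ((Real.pi : ℂ) * (α p.2 - α p.1) / ρ) := by
  have hq0 : q ≠ 0 := hq ▸ exp_ne_zero _
  have hfin : ¬IsOfFinOrder q := by
    rw [isOfFinOrder_iff_pow_eq_one]
    rintro ⟨k, hk, h⟩
    exact hroot k hk h
  rw [← ltPairs.eq_1]
  let A (j : Fin l) : ℂ := (π : ℂ) * α j / ρ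
  let b (j : Fin l) : ℂ := exp (A j) ^ 2
  let C : ℂ := (∏ p ∈ ltPairs l, exp (-A p.1) * exp (-A p.2)) * ∏ _p ∈ ltPairs l, (2 : ℂ)⁻¹
  have hshift (σ : Perm (Fin l)) : ∏ p ∈ ltPairs l, sinh (π * (α (σ p.2) - α (σ p.1) - π * I) / ρ) =
      C * ∏ p ∈ ltPairs l, (q * b (σ p.2) - q⁻¹ * b (σ p.1)) := by
    have (i j : Fin l) : sinh (π * (α j - α i - π * I) / ρ) =
        exp (-A i) * exp (-A j) * 2⁻¹ * (q * b j - q⁻¹ * b i) := by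
      rw [show (π : ℂ) * (α j - α i - π * I) / ρ = A j - A i - π ^ 2 * I / ρ by simp only [A]; ring,
        sinh_sub_sub, hq, neg_mul, neg_div]
    rw [prod_congr rfl fun p _ => this _ _, prod_mul_distrib, prod_mul_distrib,
      prod_ltPairs_mul_comp_perm (fun i => exp (-A i))]
  have hunshifted : ∏ p ∈ ltPairs l, sinh (π * (α p.2 - α p.1) / ρ) =
      C * ∏ p ∈ ltPairs l, (b p.2 - b p.1) := by
    have (i j : Fin l) : sinh (π * (α j - α i) / ρ) =
        exp (-A i) * exp (-A j) * 2⁻¹ * (b j - b i) := by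
      simpa [A, b, mul_sub, sub_div] using sinh_sub_sub (A i) (A j) 0
    rw [prod_congr rfl fun p _ => this _ _, prod_mul_distrib, prod_mul_distrib]
  simp_rw [hshift, hunshifted, mul_left_comm _ C, ← mul_sum,
    sum_sign_mul_prod_ltPairs_qsub hq0 hfin]
  ring

theorem stmt4 (l : ℕ) (hl : 1 ≤ l) (ρ : ℂ) (hρ : ρ ≠ 0) (α : Fin l → ℂ)
    (q : ℂ) (hq : q = Complex.exp (-(Real.pi : ℂ) ^ 2 * Complex.I / ρ))
    (hq0 : q ≠ 0) (hroot : ∀ k : ℕ, 0 < k → q ^ k ≠ 1) :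
    (1 / (l.factorial : ℂ)) * ∑ σ : Equiv.Perm (Fin l), (Equiv.Perm.sign σ : ℤ) *
      ∏ p ∈ Finset.univ.filter (fun p : Fin l × Fin l => p.1 < p.2),
        Complex.sinh ((Real.pi : ℂ) * (α (σ p.2) - α (σ p.1) - Real.pi * Complex.I) / ρ)
    = ((∏ m ∈ Finset.Icc 1 l, ((q ^ m - q⁻¹ ^ m) / (q - q⁻¹))) / (l.factorial : ℂ)) *
      ∏ p ∈ Finset.univ.filter (fun p : Fin l × Fin l => p.1 < p.2),
        Complex.sinh ((Real.pi : ℂ) * (α p.2 - α p.1) / ρ) :=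
  stmt4_general l ρ α q hq hroot
end

section
/- Let h(α₁,…,α_l) = Π_{1≤j<j'≤l} sinh(π(α_{j'} − α_j − πi)/λ), set a_j = e^{2πα_j/λ} and q = e^{−π²i/λ}. Then for each j with 1 ≤ j ≤ l−1, the function (a_j − q⁻² a_{j+1})·h(α₁,…,α_l) is symmetric under the exchange of α_j and α_{j+1}, and consequently Skew(a_j · h) = q⁻² · Skew(a_{j+1} · h), where Skew denotes skew-symmetrization over α₁,…,α_l. -/
open Complex Finset

private lemma key_exp (X Y T : ℂ) (hX : X ≠ 0) (hY : Y ≠ 0) (hT : T ≠ 0) :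
    (X*X - T^2 * (Y*Y)) * ((Y * X⁻¹ * T⁻¹ - X * Y⁻¹ * T)/2)
    = (Y*Y - T^2 * (X*X)) * ((X * Y⁻¹ * T⁻¹ - Y * X⁻¹ * T)/2) := by
  field_simp

private lemma swap_pair {l : ℕ} {j j' : Fin l} (hjj : (j:ℕ)+1 = (j':ℕ))
    {p : Fin l × Fin l} (h1 : p.1 < p.2) (h2 : p ≠ (j,j')) :
    Equiv.swap j j' p.1 < Equiv.swap j j' p.2 ∧
      (Equiv.swap j j' p.1, Equiv.swap j j' p.2) ≠ (j,j') := by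
  obtain ⟨p1, p2⟩ := p
  replace h1 : p1 < p2 := h1
  have hne : j ≠ j' := by intro h; rw [Fin.ext_iff] at h; omega
  have h2' : p1 = j → p2 ≠ j' := by
    intro e1 e2; exact h2 (by simp [e1, e2])
  rcases eq_or_ne p1 j with rfl | n1
  · have n2 : p2 ≠ p1 := (ne_of_gt h1)
    have n2' : p2 ≠ j' := h2' rfl
    rw [Equiv.swap_apply_left, Equiv.swap_apply_of_ne_of_ne n2 n2']
    rw [Fin.lt_def] at h1 ⊢
    simp only [ne_eq, Fin.ext_iff] at n2'
    refine ⟨by omega, ?_⟩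
    simp only [Ne, Prod.mk.injEq, not_and]
    exact fun h => absurd h hne.symm
  rcases eq_or_ne p1 j' with rfl | n1'
  · have n2 : p2 ≠ p1 := (ne_of_gt h1)
    have n2' : p2 ≠ j := by
      intro e; rw [e, Fin.lt_def] at h1; omega
    rw [Equiv.swap_apply_right, Equiv.swap_apply_of_ne_of_ne n2' n2]
    rw [Fin.lt_def] at h1 ⊢
    refine ⟨by omega, ?_⟩
    simp only [Ne, Prod.mk.injEq, not_and]
    intro _ e; simp only [ne_eq, Fin.ext_iff] at n2; rw [e] at h1; omega
  rw [Equiv.swap_apply_of_ne_of_ne n1 n1']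
  rcases eq_or_ne p2 j with rfl | m1
  · rw [Equiv.swap_apply_left]
    rw [Fin.lt_def] at h1 ⊢
    refine ⟨by omega, ?_⟩
    simp only [Ne, Prod.mk.injEq, not_and]
    intro e; exact absurd e n1
  rcases eq_or_ne p2 j' with rfl | m1'
  · rw [Equiv.swap_apply_right]
    rw [Fin.lt_def] at h1 ⊢
    simp only [ne_eq, Fin.ext_iff] at n1
    refine ⟨by omega, ?_⟩
    simp only [Ne, Prod.mk.injEq, not_and]
    intro _ e; rw [Fin.ext_iff] at e; omega
  · rw [Equiv.swap_apply_of_ne_of_ne m1 m1']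
    exact ⟨h1, h2⟩

private lemma prod_swap_eq {l : ℕ} {j j' : Fin l} (hjj : (j:ℕ)+1 = (j':ℕ))
    (g : Fin l × Fin l → ℂ) :
    ∏ p ∈ (Finset.univ.filter (fun p : Fin l × Fin l => p.1 < p.2)).erase (j, j'),
      g (Equiv.swap j j' p.1, Equiv.swap j j' p.2)
    = ∏ p ∈ (Finset.univ.filter (fun p : Fin l × Fin l => p.1 < p.2)).erase (j, j'), g p := by
  refine Finset.prod_bij' (fun p _ => (Equiv.swap j j' p.1, Equiv.swap j j' p.2))
    (fun p _ => (Equiv.swap j j' p.1, Equiv.swap j j' p.2)) ?_ ?_ ?_ ?_ ?_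
  · intro p hp
    rw [Finset.mem_erase, Finset.mem_filter] at hp ⊢
    obtain ⟨h2, _, h1⟩ := hp
    obtain ⟨g1, g2⟩ := swap_pair hjj h1 h2
    exact ⟨g2, Finset.mem_univ _, g1⟩
  · intro p hp
    rw [Finset.mem_erase, Finset.mem_filter] at hp ⊢
    obtain ⟨h2, _, h1⟩ := hp
    obtain ⟨g1, g2⟩ := swap_pair hjj h1 h2
    exact ⟨g2, Finset.mem_univ _, g1⟩
  · intro p _; simp
  · intro p _; simp
  · intro p _; rfl

private lemma part_one {l : ℕ} (lam : ℂ) (q : ℂ)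
    (hq : q = Complex.exp (-(Real.pi : ℂ) ^ 2 * Complex.I / lam))
    {j j' : Fin l} (hjj : (j:ℕ)+1 = (j':ℕ)) (α : Fin l → ℂ) :
    (Complex.exp (2 * (Real.pi:ℂ) * α j / lam)
        - q⁻¹ ^ 2 * Complex.exp (2 * (Real.pi:ℂ) * α j' / lam)) *
      ∏ p ∈ Finset.univ.filter (fun p : Fin l × Fin l => p.1 < p.2),
        Complex.sinh ((Real.pi:ℂ) * (α p.2 - α p.1 - Real.pi * Complex.I) / lam)
    = (Complex.exp (2 * (Real.pi:ℂ) * (α ∘ Equiv.swap j j') j / lam)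
        - q⁻¹ ^ 2 * Complex.exp (2 * (Real.pi:ℂ) * (α ∘ Equiv.swap j j') j' / lam)) *
      ∏ p ∈ Finset.univ.filter (fun p : Fin l × Fin l => p.1 < p.2),
        Complex.sinh ((Real.pi:ℂ) * ((α ∘ Equiv.swap j j') p.2 - (α ∘ Equiv.swap j j') p.1
          - Real.pi * Complex.I) / lam) := by
  have hqinv : q⁻¹ = Complex.exp ((Real.pi:ℂ)^2 * Complex.I / lam) := by
    rw [hq, ← Complex.exp_neg]; congr 1; ring
  have sinh_eq : ∀ z : ℂ, Complex.sinh z = (Complex.exp z - Complex.exp (-z))/2 :=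
    fun z => rfl
  have hmem : (j, j') ∈ Finset.univ.filter (fun p : Fin l × Fin l => p.1 < p.2) := by
    simp only [Finset.mem_filter, Finset.mem_univ, true_and]; rw [Fin.lt_def]; omega
  have hswj : (α ∘ Equiv.swap j j') j = α j' := by
    simp [Equiv.swap_apply_left]
  have hswj' : (α ∘ Equiv.swap j j') j' = α j := by
    simp [Equiv.swap_apply_right]
  have hsplit : ∀ β : Fin l → ℂ,
      (∏ p ∈ Finset.univ.filter (fun p : Fin l × Fin l => p.1 < p.2),
        Complex.sinh ((Real.pi:ℂ) * (β p.2 - β p.1 - Real.pi * Complex.I) / lam)) =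
      Complex.sinh ((Real.pi:ℂ) * (β j' - β j - Real.pi * Complex.I) / lam) *
        ∏ p ∈ (Finset.univ.filter (fun p : Fin l × Fin l => p.1 < p.2)).erase (j, j'),
          Complex.sinh ((Real.pi:ℂ) * (β p.2 - β p.1 - Real.pi * Complex.I) / lam) :=
    fun β => (Finset.mul_prod_erase _ _ hmem).symm
  have hprod : (∏ p ∈ (Finset.univ.filter (fun p : Fin l × Fin l => p.1 < p.2)).erase (j, j'),
        Complex.sinh ((Real.pi:ℂ) * ((α ∘ Equiv.swap j j') p.2 - (α ∘ Equiv.swap j j') p.1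
          - Real.pi * Complex.I) / lam))
      = ∏ p ∈ (Finset.univ.filter (fun p : Fin l × Fin l => p.1 < p.2)).erase (j, j'),
        Complex.sinh ((Real.pi:ℂ) * (α p.2 - α p.1 - Real.pi * Complex.I) / lam) :=
    prod_swap_eq hjj
      (fun p => Complex.sinh ((Real.pi:ℂ) * (α p.2 - α p.1 - Real.pi * Complex.I) / lam))
  rw [hsplit α, hsplit (α ∘ Equiv.swap j j'), hprod, hswj, hswj']
  rw [← mul_assoc, ← mul_assoc]
  congr 1
  set X := Complex.exp ((Real.pi:ℂ) * α j / lam) with hX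
  set Y := Complex.exp ((Real.pi:ℂ) * α j' / lam) with hY
  set T := Complex.exp ((Real.pi:ℂ)^2 * Complex.I / lam) with hT
  have eA : Complex.exp (2 * (Real.pi:ℂ) * α j / lam) = X * X := by
    rw [hX, ← Complex.exp_add]; congr 1; ring
  have eB : Complex.exp (2 * (Real.pi:ℂ) * α j' / lam) = Y * Y := by
    rw [hY, ← Complex.exp_add]; congr 1; ring
  have eS1 : Complex.exp ((Real.pi:ℂ) * (α j' - α j - Real.pi * Complex.I) / lam)
      = Y * X⁻¹ * T⁻¹ := by
    rw [hX, hY, hT, ← Complex.exp_neg, ← Complex.exp_neg, ← Complex.exp_add,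
      ← Complex.exp_add]
    congr 1; ring
  have eS2 : Complex.exp (-((Real.pi:ℂ) * (α j' - α j - Real.pi * Complex.I) / lam))
      = X * Y⁻¹ * T := by
    rw [hX, hY, hT, ← Complex.exp_neg, ← Complex.exp_add, ← Complex.exp_add]
    congr 1; ring
  have eS3 : Complex.exp ((Real.pi:ℂ) * (α j - α j' - Real.pi * Complex.I) / lam)
      = X * Y⁻¹ * T⁻¹ := by
    rw [hX, hY, hT, ← Complex.exp_neg, ← Complex.exp_neg, ← Complex.exp_add,
      ← Complex.exp_add]
    congr 1; ring
  have eS4 : Complex.exp (-((Real.pi:ℂ) * (α j - α j' - Real.pi * Complex.I) / lam))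
      = Y * X⁻¹ * T := by
    rw [hX, hY, hT, ← Complex.exp_neg, ← Complex.exp_add, ← Complex.exp_add]
    congr 1; ring
  rw [sinh_eq, sinh_eq, hqinv, eA, eB, eS1, eS2, eS3, eS4]
  exact key_exp X Y T (Complex.exp_ne_zero _) (Complex.exp_ne_zero _)
    (Complex.exp_ne_zero _)

theorem stmt5 (l : ℕ) (lam : ℂ) (hlam : lam ≠ 0) (j : Fin l) (hj : (j : ℕ) + 1 < l)
    (q : ℂ) (hq : q = Complex.exp (-(Real.pi : ℂ) ^ 2 * Complex.I / lam)) :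
    let j' : Fin l := ⟨(j : ℕ) + 1, hj⟩
    let h : (Fin l → ℂ) → ℂ := fun β =>
      ∏ p ∈ Finset.univ.filter (fun p : Fin l × Fin l => p.1 < p.2),
        Complex.sinh ((Real.pi : ℂ) * (β p.2 - β p.1 - Real.pi * Complex.I) / lam)
    let a : Fin l → (Fin l → ℂ) → ℂ := fun i β => Complex.exp (2 * (Real.pi : ℂ) * β i / lam)
    (∀ α : Fin l → ℂ,
        (a j α - q⁻¹ ^ 2 * a j' α) * h α
          = (a j (α ∘ Equiv.swap j j') - q⁻¹ ^ 2 * a j' (α ∘ Equiv.swap j j'))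
              * h (α ∘ Equiv.swap j j')) ∧
    (∀ α : Fin l → ℂ,
        (1 / (l.factorial : ℂ)) * ∑ σ : Equiv.Perm (Fin l), (Equiv.Perm.sign σ : ℤ) *
            (a j (α ∘ σ) * h (α ∘ σ))
          = q⁻¹ ^ 2 * ((1 / (l.factorial : ℂ)) * ∑ σ : Equiv.Perm (Fin l),
              (Equiv.Perm.sign σ : ℤ) * (a j' (α ∘ σ) * h (α ∘ σ)))) := by
  intro j' h a
  have hjj : (j:ℕ)+1 = (j':ℕ) := rfl
  have hne : j ≠ j' := by intro e; rw [Fin.ext_iff] at e; omega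
  have main1 : ∀ α : Fin l → ℂ,
      (a j α - q⁻¹ ^ 2 * a j' α) * h α
        = (a j (α ∘ Equiv.swap j j') - q⁻¹ ^ 2 * a j' (α ∘ Equiv.swap j j'))
            * h (α ∘ Equiv.swap j j') :=
    fun α => part_one lam q hq hjj α
  refine ⟨main1, ?_⟩
  intro α
  set f : Equiv.Perm (Fin l) → ℂ := fun σ =>
    ((Equiv.Perm.sign σ : ℤ) : ℂ) *
      ((a j (α ∘ σ) - q⁻¹ ^ 2 * a j' (α ∘ σ)) * h (α ∘ σ)) with hf
  have hswapf : ∀ σ : Equiv.Perm (Fin l), f (σ * Equiv.swap j j') = - f σ := by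
    intro σ
    have hc : α ∘ ⇑(σ * Equiv.swap j j') = (α ∘ σ) ∘ Equiv.swap j j' := rfl
    have hs : ((Equiv.Perm.sign (σ * Equiv.swap j j') : ℤ) : ℂ)
        = -((Equiv.Perm.sign σ : ℤ) : ℂ) := by
      rw [Equiv.Perm.sign_mul, Equiv.Perm.sign_swap hne]
      push_cast
      ring
    rw [hf]
    simp only [hc, hs]
    rw [← main1 (α ∘ σ)]
    ring
  have hzero : ∑ σ : Equiv.Perm (Fin l), f σ = 0 := by
    have hre : ∑ σ : Equiv.Perm (Fin l), f (σ * Equiv.swap j j')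
        = ∑ σ : Equiv.Perm (Fin l), f σ :=
      Equiv.sum_comp (Equiv.mulRight (Equiv.swap j j')) f
    have hkey : ∑ σ : Equiv.Perm (Fin l), f σ = - ∑ σ : Equiv.Perm (Fin l), f σ :=
      calc ∑ σ : Equiv.Perm (Fin l), f σ
          = ∑ σ : Equiv.Perm (Fin l), f (σ * Equiv.swap j j') := hre.symm
        _ = ∑ σ : Equiv.Perm (Fin l), - f σ :=
            Finset.sum_congr rfl fun σ _ => hswapf σ
        _ = - ∑ σ : Equiv.Perm (Fin l), f σ := by rw [Finset.sum_neg_distrib]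
    linear_combination hkey / 2
  have expand : ∑ σ : Equiv.Perm (Fin l), f σ =
      (∑ σ : Equiv.Perm (Fin l), ((Equiv.Perm.sign σ : ℤ) : ℂ) * (a j (α ∘ σ) * h (α ∘ σ)))
        - q⁻¹ ^ 2 * ∑ σ : Equiv.Perm (Fin l),
            ((Equiv.Perm.sign σ : ℤ) : ℂ) * (a j' (α ∘ σ) * h (α ∘ σ)) := by
    rw [Finset.mul_sum, ← Finset.sum_sub_distrib]
    exact Finset.sum_congr rfl fun σ _ => by rw [hf]; ring
  have key : (∑ σ : Equiv.Perm (Fin l), ((Equiv.Perm.sign σ : ℤ) : ℂ) *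
        (a j (α ∘ σ) * h (α ∘ σ)))
      = q⁻¹ ^ 2 * ∑ σ : Equiv.Perm (Fin l),
          ((Equiv.Perm.sign σ : ℤ) : ℂ) * (a j' (α ∘ σ) * h (α ∘ σ)) := by
    have hsub := expand ▸ hzero
    linear_combination hsub
  rw [key]
  ring
end

section
/- For complex numbers α₁,…,α_l, ρ with Re ρ > 0, and Λ ∈ ℂ, the following identity holds: e^{(π²i/2ρ)(l−1)(l−2Λ−2)} · Skew( e^{−(π/ρ)Σ_{j=1}^{l−1} α_j} · Π_{j=2}^{l} sinh(π(α_j + Λπi)/ρ) · Π_{j=1}^{l−2} Π_{j'=j+2}^{l} sinh(π(α_{j'} − α_j − πi)/ρ) ) = (1/l!) Π_{1≤j<j'≤l} sinh(π(α_{j'} − α_j)/ρ). -/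
/-!
Put `y i = exp (2 π α i / ρ)`. Writing `sinh (x - z) = exp (-(x + z)) (exp (2x) - exp (2z)) / 2`,
every `sinh` factor becomes an exponential prefactor times `y j - a` or `y j' - c * y j`. The
prefactors do not depend on the permutation (each `α i` occurs `l - 1` times in total) and their
constant part cancels the phase. What is left is the alternating sum of the polynomial
`∏_{j ≥ 1} (y j - a) * ∏_{j' ≥ j + 2} (y j' - c * y j)`. Expanding it into monomials, only
monomials with pairwise distinct exponents survive antisymmetrization, and the only such monomial
is the leading one `y 1 * y 2 ^ 2 * ⋯ * y (l-1) ^ (l-1)`, whose alternant is the Vandermonde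
determinant `∏_{j < j'} (y j' - y j)`; this is the right-hand side written in the same variables.
-/

open Finset Equiv Equiv.Perm Function

namespace SinhSkew

section Fibres

variable {α ι M : Type*} [Fintype ι] [DecidableEq ι]

@[to_additive]
lemma prod_comp_eq_prod_pow [CommMonoid M] (s : Finset α) (g : α → ι) (f : ι → M) :
    ∏ a ∈ s, f (g a) = ∏ i, f i ^ #(s.filter (g · = i)) := by
  simp_rw [← prod_fiberwise' s g f, prod_const]

lemma card_filter_fst_eq (r : ι → ι → Prop) [DecidableRel r] (i : ι) :
    #((univ.filter fun p : ι × ι => r p.1 p.2).filter (·.1 = i)) = #(univ.filter (r i)) := by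
  refine card_bij' (fun p _ => p.2) (fun j _ => (i, j)) ?_ ?_ ?_ ?_ <;> aesop

lemma card_filter_snd_eq (r : ι → ι → Prop) [DecidableRel r] (j : ι) :
    #((univ.filter fun p : ι × ι => r p.1 p.2).filter (·.2 = j)) = #(univ.filter (r · j)) := by
  refine card_bij' (fun p _ => p.1) (fun i _ => (i, j)) ?_ ?_ ?_ ?_ <;> aesop

end Fibres

lemma card_filter_fin_val (l : ℕ) (q : ℕ → Prop) [DecidablePred q] :
    #(univ.filter fun i : Fin l => q i) = #((range l).filter q) := by
  rw [card_filter, card_filter, Fin.sum_univ_eq_sum_range (fun i => if q i then 1 else 0)]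

abbrev nonFirst (l : ℕ) : Finset (Fin l) := univ.filter fun i => 1 ≤ (i : ℕ)
abbrev nonLast (l : ℕ) : Finset (Fin l) := univ.filter fun i => (i : ℕ) < l - 1
abbrev farPairs (l : ℕ) : Finset (Fin l × Fin l) := univ.filter fun p => (p.1 : ℕ) + 2 ≤ p.2
abbrev ltPairs (l : ℕ) : Finset (Fin l × Fin l) := univ.filter fun p => p.1 < p.2

section Counting

variable {l : ℕ}

lemma card_filter_nonFirst_add_card_filter_farPairs_snd (i : Fin l) :
    #((nonFirst l).filter (· = i)) + #((farPairs l).filter (·.2 = i)) = i := by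
  rw [filter_eq', card_filter_snd_eq (fun j k : Fin l => (j : ℕ) + 2 ≤ k),
    card_filter_fin_val l (· + 2 ≤ (i : ℕ)),
    show (range l).filter (· + 2 ≤ (i : ℕ)) = range (i - 1) by ext; simp; omega, card_range]
  split_ifs with h <;> simp at h <;> simp <;> omega

lemma card_filter_nonLast_add_card_filter_farPairs_fst (i : Fin l) :
    #((nonLast l).filter (· = i)) + #((farPairs l).filter (·.1 = i)) = l - 1 - i := by
  rw [filter_eq', card_filter_fst_eq (fun j k : Fin l => (j : ℕ) + 2 ≤ k),
    card_filter_fin_val l ((i : ℕ) + 2 ≤ ·),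
    show (range l).filter ((i : ℕ) + 2 ≤ ·) = Ico ((i : ℕ) + 2) l by ext; simp; omega, Nat.card_Ico]
  split_ifs with h <;> simp at h <;> simp <;> omega

lemma card_filter_ltPairs_fst (i : Fin l) : #((ltPairs l).filter (·.1 = i)) = l - 1 - i := by
  rw [card_filter_fst_eq (· < ·), filter_lt_eq_Ioi, Fin.card_Ioi]

lemma card_filter_ltPairs_snd (i : Fin l) : #((ltPairs l).filter (·.2 = i)) = i := by
  rw [card_filter_snd_eq (· < ·), filter_gt_eq_Iio, Fin.card_Iio]

lemma sum_nonLast_add_sum_nonFirst_add_sum_farPairs {M : Type*} [AddCommMonoid M]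
    (f : Fin l → M) :
    ∑ i ∈ nonLast l, f i + ∑ i ∈ nonFirst l, f i + ∑ p ∈ farPairs l, (f p.1 + f p.2)
      = (l - 1) • ∑ i, f i := by
  rw [sum_add_distrib, sum_comp_eq_sum_nsmul (nonLast l) (fun i => i),
    sum_comp_eq_sum_nsmul (nonFirst l) (fun i => i), sum_comp_eq_sum_nsmul _ Prod.fst,
    sum_comp_eq_sum_nsmul _ Prod.snd, smul_sum, ← sum_add_distrib, ← sum_add_distrib,
    ← sum_add_distrib]
  refine sum_congr rfl fun i _ => ?_
  have := card_filter_nonFirst_add_card_filter_farPairs_snd i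
  have := card_filter_nonLast_add_card_filter_farPairs_fst i
  simp only [← add_smul]
  congr 1
  omega

lemma sum_ltPairs {M : Type*} [AddCommMonoid M] (f : Fin l → M) :
    ∑ p ∈ ltPairs l, (f p.1 + f p.2) = (l - 1) • ∑ i, f i := by
  rw [sum_add_distrib, sum_comp_eq_sum_nsmul _ Prod.fst, sum_comp_eq_sum_nsmul _ Prod.snd,
    smul_sum, ← sum_add_distrib]
  refine sum_congr rfl fun i _ => ?_
  rw [card_filter_ltPairs_fst, card_filter_ltPairs_snd, ← add_smul]
  congr 1
  omega

lemma card_nonFirst_add_card_farPairs : #(nonFirst l) + #(farPairs l) = #(ltPairs l) := by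
  rw [card_eq_sum_card_fiberwise (s := nonFirst l) (f := fun i => i) (fun _ _ => mem_univ _),
    card_eq_sum_card_fiberwise (s := farPairs l) (f := Prod.snd) (fun _ _ => mem_univ _),
    card_eq_sum_card_fiberwise (s := ltPairs l) (f := Prod.snd) (fun _ _ => mem_univ _),
    ← sum_add_distrib]
  simp only [card_filter_nonFirst_add_card_filter_farPairs_snd, card_filter_ltPairs_snd]

lemma card_ltPairs_mul_two : #(ltPairs l) * 2 = l * (l - 1) := by
  rw [card_eq_sum_card_fiberwise (f := Prod.snd) (t := univ) (fun _ _ => mem_univ _)]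
  simp only [card_filter_ltPairs_snd]
  rw [Fin.sum_univ_eq_sum_range (fun i => i), sum_range_id_mul_two]

lemma card_nonFirst : #(nonFirst l) = l - 1 := by
  rw [card_filter_fin_val l (1 ≤ ·), show (range l).filter (1 ≤ ·) = Ico 1 l by ext; simp; omega,
    Nat.card_Ico]

end Counting

section Monomials

variable {ι R : Type*} [Fintype ι] [DecidableEq ι]

def monomialExp (A : Finset ι) (B C : Finset (ι × ι)) (i : ι) : ℕ :=
  #(A.filter (· = i)) + #(B.filter (·.2 = i)) + #(C.filter (·.1 = i))

lemma prod_mul_prod_snd_mul_prod_fst [CommMonoid R] (A : Finset ι) (B C : Finset (ι × ι))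
    (y : ι → R) :
    (∏ i ∈ A, y i) * (∏ p ∈ B, y p.2) * ∏ p ∈ C, y p.1 = ∏ i, y i ^ monomialExp A B C i := by
  rw [prod_comp_eq_prod_pow A (fun i => i), prod_comp_eq_prod_pow B Prod.snd,
    prod_comp_eq_prod_pow C Prod.fst, ← prod_mul_distrib, ← prod_mul_distrib]
  simp only [monomialExp, pow_add]

lemma prod_sub_mul_prod_sub_eq_sum [CommRing R] (s : Finset ι) (u : Finset (ι × ι)) (a c : R)
    (y : ι → R) :
    (∏ i ∈ s, (y i - a)) * ∏ p ∈ u, (y p.2 - c * y p.1) =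
      ∑ A ∈ s.powerset, ∑ B ∈ u.powerset,
        (-a) ^ #(s \ A) * (-c) ^ #(u \ B) * ∏ i, y i ^ monomialExp A B (u \ B) i := by
  simp_rw [sub_eq_add_neg, ← neg_mul, prod_add, sum_mul_sum]
  refine sum_congr rfl fun A _ => sum_congr rfl fun B _ => ?_
  rw [← prod_mul_prod_snd_mul_prod_fst, prod_mul_distrib, prod_const, prod_const]
  ring

end Monomials

section Alternants

variable {R : Type*} [CommRing R] {l : ℕ}

lemma sum_sign_mul_prod_pow_eq_det (y : Fin l → R) (e : Fin l → ℕ) :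
    ∑ σ : Perm (Fin l), ((sign σ : ℤ) : R) * ∏ i, y (σ i) ^ e i
      = (Matrix.of fun i j => y i ^ e j).det := by
  simp [Matrix.det_apply, Units.smul_def]

lemma det_of_pow_eq_zero (y : Fin l → R) {e : Fin l → ℕ} (he : ¬ Injective e) :
    (Matrix.of fun i j => y i ^ e j).det = 0 := by
  obtain ⟨i, j, hij, hne⟩ := not_injective_iff.1 he
  exact Matrix.det_zero_of_column_eq hne fun k => by simp [hij]

lemma det_of_pow_val (y : Fin l → R) :
    (Matrix.of fun i (j : Fin l) => y i ^ (j : ℕ)).det = ∏ p ∈ ltPairs l, (y p.2 - y p.1) := by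
  rw [show Matrix.of _ = Matrix.vandermonde y from rfl, Matrix.det_vandermonde, prod_filter,
    Fintype.prod_prod_type]
  refine prod_congr rfl fun i _ => ?_
  rw [← prod_filter, filter_lt_eq_Ioi]

lemma sum_sign_mul_prod_sub_mul_prod_sub (s : Finset (Fin l)) (u : Finset (Fin l × Fin l))
    (a c : R) (y : Fin l → R) :
    ∑ σ : Perm (Fin l), ((sign σ : ℤ) : R) *
        ((∏ i ∈ s, (y (σ i) - a)) * ∏ p ∈ u, (y (σ p.2) - c * y (σ p.1))) =
      ∑ A ∈ s.powerset, ∑ B ∈ u.powerset, (-a) ^ #(s \ A) * (-c) ^ #(u \ B) *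
        (Matrix.of fun i j => y i ^ monomialExp A B (u \ B) j).det := by
  simp_rw [prod_sub_mul_prod_sub_eq_sum s u a c, mul_sum]
  rw [sum_comm]
  refine sum_congr rfl fun A _ => ?_
  rw [sum_comm]
  refine sum_congr rfl fun B _ => ?_
  rw [← sum_sign_mul_prod_pow_eq_det, mul_sum]
  exact sum_congr rfl fun σ _ => by ring

end Alternants

section Exponents

variable {l : ℕ} {A : Finset (Fin l)} {B : Finset (Fin l × Fin l)}

lemma monomialExp_nonFirst_farPairs (i : Fin l) :
    monomialExp (nonFirst l) (farPairs l) ∅ i = i := by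
  simp [monomialExp, card_filter_nonFirst_add_card_filter_farPairs_snd]

lemma le_of_injOn_Iic {f : Fin l → ℕ} {m : Fin l} (hf : Set.InjOn f (Iic m))
    (hlt : ∀ i < m, f i < m) : (m : ℕ) ≤ f m := by
  by_contra! h
  have := card_le_card_of_injOn f (t := range m) (fun i hi => by
    rcases (mem_Iic.1 hi).lt_or_eq with hi | rfl
    · exact mem_range.2 (hlt i hi)
    · exact mem_range.2 h) hf
  rw [Fin.card_Iic, card_range] at this
  omega

lemma card_filter_add_card_filter_snd_le (hA : A ⊆ nonFirst l) (hB : B ⊆ farPairs l)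
    (i : Fin l) : #(A.filter (· = i)) + #(B.filter (·.2 = i)) ≤ i := by
  rw [← card_filter_nonFirst_add_card_filter_farPairs_snd i]
  exact add_le_add (card_le_card (filter_subset_filter _ hA))
    (card_le_card (filter_subset_filter _ hB))

lemma filter_subset_of_card_filter_add_card_filter_snd_eq (hA : A ⊆ nonFirst l)
    (hB : B ⊆ farPairs l) {i : Fin l} (h : #(A.filter (· = i)) + #(B.filter (·.2 = i)) = i) :
    (nonFirst l).filter (· = i) ⊆ A ∧ (farPairs l).filter (·.2 = i) ⊆ B := by
  have hA' := filter_subset_filter (· = i) hA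
  have hB' := filter_subset_filter (·.2 = i) hB
  have := card_le_card hA'
  have := card_le_card hB'
  have := card_filter_nonFirst_add_card_filter_farPairs_snd i
  rw [← eq_of_subset_of_card_le hA' (by omega), ← eq_of_subset_of_card_le hB' (by omega)]
  exact ⟨filter_subset _ _, filter_subset _ _⟩

lemma card_filter_sdiff_fst_le {m : Fin l}
    (hsat : ∀ j, m < j → (farPairs l).filter (·.2 = j) ⊆ B) (i : Fin l) :
    #((farPairs l \ B).filter (·.1 = i)) ≤ m - (i + 1) := by
  rw [← Nat.card_Ioc]
  refine card_le_card_of_injOn (fun p => (p.2 : ℕ)) (fun p hp => ?_) (fun p hp q hq h => ?_)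
  · simp only [coe_filter, mem_sdiff, mem_filter, mem_univ, true_and] at hp
    obtain ⟨⟨hfar, hpB⟩, rfl⟩ := hp
    have : p.2 ≤ m := not_lt.1 fun hm => hpB (hsat _ hm (by simp [hfar]))
    simp only [coe_Ioc, Set.mem_Ioc]
    omega
  · simp only [coe_filter] at hp hq
    exact Prod.ext (hp.2.trans hq.2.symm) (Fin.ext h)

/- Read the exponents as scores of a tournament on `Fin l`: the factor `y j' - c * y j` is a game
between `j` and `j'` won by the variable picked from it, and `y j - a` is the game between `j - 1`
and `j`, which `j - 1` never wins. Descending from the top: if every vertex above `m` has won all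
its games against smaller vertices, every vertex below `m` scores less than `m`, so injectivity
forces `m` to score `m`, i.e. to win all its games against smaller vertices as well. -/
theorem eq_of_injective_monomialExp (hA : A ⊆ nonFirst l) (hB : B ⊆ farPairs l)
    (he : Injective (monomialExp A B (farPairs l \ B))) : A = nonFirst l ∧ B = farPairs l := by
  have hsat : ∀ m, (nonFirst l).filter (· = m) ⊆ A ∧ (farPairs l).filter (·.2 = m) ⊆ B := by
    intro m
    induction m using WellFoundedGT.induction with
    | _ m ih =>
    have hlow := card_filter_add_card_filter_snd_le hA hB
    have hhigh := card_filter_sdiff_fst_le fun j hj => (ih j hj).2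
    have hm := le_of_injOn_Iic (f := monomialExp A B (farPairs l \ B)) (m := m) he.injOn
      fun i hi => by
        have := hlow i; have := hhigh i; rw [Fin.lt_def] at hi; simp only [monomialExp]; omega
    refine filter_subset_of_card_filter_add_card_filter_snd_eq hA hB ?_
    have := hlow m; have := hhigh m; simp only [monomialExp] at hm; omega
  refine ⟨hA.antisymm fun i hi => (hsat i).1 ?_, hB.antisymm fun p hp => (hsat p.2).2 ?_⟩ <;>
    simp_all

end Exponents

theorem sum_sign_mul_prod_nonFirst_mul_prod_farPairs {R : Type*} [CommRing R] {l : ℕ}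
    (a c : R) (y : Fin l → R) :
    ∑ σ : Perm (Fin l), ((sign σ : ℤ) : R) * ((∏ i ∈ nonFirst l, (y (σ i) - a)) *
        ∏ p ∈ farPairs l, (y (σ p.2) - c * y (σ p.1))) = ∏ p ∈ ltPairs l, (y p.2 - y p.1) := by
  rw [sum_sign_mul_prod_sub_mul_prod_sub, sum_eq_single_of_mem _ (mem_powerset_self _),
    sum_eq_single_of_mem _ (mem_powerset_self _)]
  · simp [monomialExp_nonFirst_farPairs, det_of_pow_val]
  · intro B hB hne
    rw [det_of_pow_eq_zero _ fun h => hne (eq_of_injective_monomialExp subset_rfl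
      (mem_powerset.1 hB) h).2, mul_zero]
  · intro A hA hne
    refine sum_eq_zero fun B hB => ?_
    rw [det_of_pow_eq_zero _ fun h => hne (eq_of_injective_monomialExp (mem_powerset.1 hA)
      (mem_powerset.1 hB) h).1, mul_zero]

section Hyperbolic

open Complex

lemma sinh_sub_eq (x z : ℂ) :
    sinh (x - z) = exp (-(x + z)) * 2⁻¹ * (exp (2 * x) - exp (2 * z)) := by
  rw [sinh, show x - z = 2 * x + -(x + z) by ring, show -(2 * x + -(x + z)) = 2 * z + -(x + z) by
    ring, exp_add, exp_add]
  ring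

lemma prod_sinh_sub {α : Type*} (s : Finset α) (f g : α → ℂ) :
    ∏ a ∈ s, sinh (f a - g a) =
      exp (-∑ a ∈ s, (f a + g a)) * 2⁻¹ ^ #s * ∏ a ∈ s, (exp (2 * f a) - exp (2 * g a)) := by
  simp_rw [sinh_sub_eq, prod_mul_distrib, prod_const, ← exp_sum, sum_neg_distrib]

variable {l : ℕ} (s ρ Λ : ℂ)

noncomputable def summand (β : Fin l → ℂ) : ℂ :=
  exp (-(s / ρ) * ∑ i ∈ nonLast l, β i) * (∏ i ∈ nonFirst l, sinh (s * (β i + Λ * s * I) / ρ)) *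
    ∏ p ∈ farPairs l, sinh (s * (β p.2 - β p.1 - s * I) / ρ)

lemma summand_eq (β : Fin l → ℂ) :
    summand s ρ Λ β =
      exp ((#(nonFirst l) * Λ - #(farPairs l)) * (s ^ 2 * I / ρ)) *
        (exp (-((l - 1) • ∑ i, s * β i / ρ)) * 2⁻¹ ^ #(ltPairs l)) *
        ((∏ i ∈ nonFirst l, (exp (2 * (s * β i / ρ)) - exp (2 * -(Λ * (s ^ 2 * I / ρ))))) *
          ∏ p ∈ farPairs l, (exp (2 * (s * β p.2 / ρ)) -
            exp (2 * (s ^ 2 * I / ρ)) * exp (2 * (s * β p.1 / ρ)))) := by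
  set x : Fin l → ℂ := fun i => s * β i / ρ
  set κ := s ^ 2 * I / ρ
  have hL : ∀ i, s * (β i + Λ * s * I) / ρ = x i - -(Λ * κ) := fun i => by simp only [x, κ]; ring
  have hP : ∀ p : Fin l × Fin l, s * (β p.2 - β p.1 - s * I) / ρ = x p.2 - (x p.1 + κ) :=
    fun p => by simp only [x, κ]; ring
  have hc : ∀ p : Fin l × Fin l, exp (2 * (x p.1 + κ)) = exp (2 * κ) * exp (2 * x p.1) :=
    fun p => by rw [← exp_add]; ring_nf
  have hE : -(s / ρ) * ∑ i ∈ nonLast l, β i + -∑ i ∈ nonFirst l, (x i + -(Λ * κ)) +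
      -∑ p ∈ farPairs l, (x p.2 + (x p.1 + κ)) =
      (#(nonFirst l) * Λ - #(farPairs l)) * κ + -((l - 1) • ∑ i, x i) := by
    rw [← sum_nonLast_add_sum_nonFirst_add_sum_farPairs x]
    simp only [sum_add_distrib, sum_const, nsmul_eq_mul, x, ← sum_div, ← mul_sum]
    ring
  have hE' := congrArg exp hE
  simp only [exp_add] at hE'
  simp_rw [summand, hL, hP, prod_sinh_sub, hc, ← card_nonFirst_add_card_farPairs, pow_add]
  linear_combination (2⁻¹ ^ #(nonFirst l) * 2⁻¹ ^ #(farPairs l) *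
    ((∏ i ∈ nonFirst l, (exp (2 * x i) - exp (2 * -(Λ * κ)))) *
      ∏ p ∈ farPairs l, (exp (2 * x p.2) - exp (2 * κ) * exp (2 * x p.1)))) * hE'

lemma prod_ltPairs_sinh (α : Fin l → ℂ) :
    ∏ p ∈ ltPairs l, sinh (s * (α p.2 - α p.1) / ρ) =
      exp (-((l - 1) • ∑ i, s * α i / ρ)) * 2⁻¹ ^ #(ltPairs l) *
        ∏ p ∈ ltPairs l, (exp (2 * (s * α p.2 / ρ)) - exp (2 * (s * α p.1 / ρ))) := by
  simp_rw [show ∀ p : Fin l × Fin l, s * (α p.2 - α p.1) / ρ = s * α p.2 / ρ - s * α p.1 / ρ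
    from fun p => by ring, prod_sinh_sub, ← sum_ltPairs, add_comm]

lemma sum_sign_mul_summand_comp (α : Fin l → ℂ) :
    ∑ σ : Perm (Fin l), ((sign σ : ℤ) : ℂ) * summand s ρ Λ (α ∘ σ) =
      exp ((#(nonFirst l) * Λ - #(farPairs l)) * (s ^ 2 * I / ρ)) *
        ∏ p ∈ ltPairs l, sinh (s * (α p.2 - α p.1) / ρ) := by
  have hsum (σ : Perm (Fin l)) : ∑ i, s * α (σ i) / ρ = ∑ i, s * α i / ρ :=
    Equiv.sum_comp σ fun i => s * α i / ρ
  simp_rw [summand_eq, comp_apply, hsum,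
    mul_left_comm _ (exp ((#(nonFirst l) * Λ - #(farPairs l)) * (s ^ 2 * I / ρ)) * _)]
  rw [← mul_sum, sum_sign_mul_prod_nonFirst_mul_prod_farPairs _ _
    fun i => exp (2 * (s * α i / ρ)), prod_ltPairs_sinh]
  ring

lemma exp_phase_mul_exp_card_eq_one (hl : 1 ≤ l) :
    exp (s ^ 2 * I / (2 * ρ) * ((l : ℂ) - 1) * ((l : ℂ) - 2 * Λ - 2)) *
      exp ((#(nonFirst l) * Λ - #(farPairs l)) * (s ^ 2 * I / ρ)) = 1 := by
  obtain ⟨n, rfl⟩ := Nat.exists_eq_add_of_le' hl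
  have h1 : (#(nonFirst (n + 1)) : ℂ) = n := by rw [card_nonFirst]; simp
  have h2 : (#(nonFirst (n + 1)) : ℂ) + #(farPairs (n + 1)) = #(ltPairs (n + 1)) := by
    exact_mod_cast card_nonFirst_add_card_farPairs
  have h3 : (#(ltPairs (n + 1)) : ℂ) * 2 = (n + 1) * n := by
    exact_mod_cast card_ltPairs_mul_two.trans (by simp)
  rw [← exp_add]
  convert exp_zero
  push_cast
  linear_combination (s ^ 2 * I / ρ * Λ + s ^ 2 * I / ρ) * h1 - s ^ 2 * I / ρ * h2
    - s ^ 2 * I / ρ / 2 * h3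

end Hyperbolic

end SinhSkew

theorem stmt13_general (l : ℕ) (hl : 1 ≤ l) (ρ Λ : ℂ) (α : Fin l → ℂ) :
    let F : (Fin l → ℂ) → ℂ := fun β =>
      Complex.exp (-((Real.pi : ℂ) / ρ)
          * ∑ i ∈ Finset.univ.filter (fun i : Fin l => (i : ℕ) < l - 1), β i) *
      (∏ i ∈ Finset.univ.filter (fun i : Fin l => 1 ≤ (i : ℕ)),
        Complex.sinh ((Real.pi : ℂ) * (β i + Λ * Real.pi * Complex.I) / ρ)) *
      ∏ p ∈ Finset.univ.filter (fun p : Fin l × Fin l => (p.1 : ℕ) + 2 ≤ (p.2 : ℕ)),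
        Complex.sinh ((Real.pi : ℂ) * (β p.2 - β p.1 - Real.pi * Complex.I) / ρ)
    Complex.exp (((Real.pi : ℂ) ^ 2 * Complex.I / (2 * ρ)) * ((l : ℂ) - 1) * ((l : ℂ) - 2 * Λ - 2)) *
        ((1 / (l.factorial : ℂ)) * ∑ σ : Equiv.Perm (Fin l), (Equiv.Perm.sign σ : ℤ) * F (α ∘ σ))
      = (1 / (l.factorial : ℂ)) * ∏ p ∈ Finset.univ.filter (fun p : Fin l × Fin l => p.1 < p.2),
          Complex.sinh ((Real.pi : ℂ) * (α p.2 - α p.1) / ρ) := by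
  change _ * (_ * ∑ σ : Equiv.Perm (Fin l), _ * SinhSkew.summand _ ρ Λ (α ∘ σ)) = _
  rw [SinhSkew.sum_sign_mul_summand_comp]
  linear_combination (1 / (l.factorial : ℂ) * ∏ p ∈ SinhSkew.ltPairs l,
    Complex.sinh ((Real.pi : ℂ) * (α p.2 - α p.1) / ρ)) *
      SinhSkew.exp_phase_mul_exp_card_eq_one _ ρ Λ hl

theorem stmt13 (l : ℕ) (hl : 1 ≤ l) (ρ Λ : ℂ) (hρ : 0 < ρ.re) (α : Fin l → ℂ) :
    let F : (Fin l → ℂ) → ℂ := fun β =>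
      Complex.exp (-((Real.pi : ℂ) / ρ)
          * ∑ i ∈ Finset.univ.filter (fun i : Fin l => (i : ℕ) < l - 1), β i) *
      (∏ i ∈ Finset.univ.filter (fun i : Fin l => 1 ≤ (i : ℕ)),
        Complex.sinh ((Real.pi : ℂ) * (β i + Λ * Real.pi * Complex.I) / ρ)) *
      ∏ p ∈ Finset.univ.filter (fun p : Fin l × Fin l => (p.1 : ℕ) + 2 ≤ (p.2 : ℕ)),
        Complex.sinh ((Real.pi : ℂ) * (β p.2 - β p.1 - Real.pi * Complex.I) / ρ)
    Complex.exp (((Real.pi : ℂ) ^ 2 * Complex.I / (2 * ρ)) * ((l : ℂ) - 1) * ((l : ℂ) - 2 * Λ - 2)) *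
        ((1 / (l.factorial : ℂ)) * ∑ σ : Equiv.Perm (Fin l), (Equiv.Perm.sign σ : ℤ) * F (α ∘ σ))
      = (1 / (l.factorial : ℂ)) * ∏ p ∈ Finset.univ.filter (fun p : Fin l × Fin l => p.1 < p.2),
          Complex.sinh ((Real.pi : ℂ) * (α p.2 - α p.1) / ρ) :=
  stmt13_general l hl ρ Λ α
end

section
/- Let n ≥ 1 and l ≥ 0 be integers, and equip 𝒵ₗⁿ (n-tuples of non-negative integers summing to l) with the partial order L ⪯ L' iff l_n ≤ l'_n, l_{n−1}+l_n ≤ l'_{n−1}+l'_n, …, l₂+⋯+l_n ≤ l'₂+⋯+l'_n. For L ∈ 𝒵ₗⁿ define γᴸ: {1,…,l} → {1,…,n} by γᴸ(j) = m iff l₁+⋯+l_{m−1} < j ≤ l₁+⋯+l_m. Then: L ⪯ L' fails if and only if for every permutation σ ∈ S_l there exists j with γᴸ(σ(j)) > γ^{L'}(j). -/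
open Finset

private lemma stmt16_card_lt (l c : ℕ) (hc : c ≤ l) :
    ((Finset.univ : Finset (Fin l)).filter (fun j : Fin l => (j : ℕ) < c)).card = c := by
  apply Finset.card_eq_of_bijective (fun i hi => ⟨i, lt_of_lt_of_le hi hc⟩)
  · intro a ha
    simp only [mem_filter, mem_univ, true_and] at ha
    exact ⟨a, ha, rfl⟩
  · intro i hi
    simp [hi]
  · intro i j hi hj h
    simpa using congrArg Fin.val h

private lemma stmt16_S_mono {n : ℕ} (M : Fin n → ℕ) {m m' : Fin n} (h : m ≤ m') :
    ∑ i ∈ Finset.univ.filter (fun i : Fin n => i ≤ m), M i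
      ≤ ∑ i ∈ Finset.univ.filter (fun i : Fin n => i ≤ m'), M i := by
  apply Finset.sum_le_sum_of_subset
  intro i hi
  simp only [mem_filter, mem_univ, true_and] at *
  exact le_trans hi h

private lemma stmt16_char {n : ℕ} (M : Fin n → ℕ) (k : Fin n) (j : ℕ) :
    ((Finset.univ : Finset (Fin n)).filter (fun m =>
      ∑ i ∈ Finset.univ.filter (fun i : Fin n => i ≤ m), M i ≤ j)).card ≤ (k : ℕ)
    ↔ j < ∑ i ∈ Finset.univ.filter (fun i : Fin n => i ≤ k), M i := by
  constructor
  · intro h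
    by_contra hj
    push_neg at hj
    have hsub : Finset.Iic k ⊆ (Finset.univ : Finset (Fin n)).filter (fun m =>
        ∑ i ∈ Finset.univ.filter (fun i : Fin n => i ≤ m), M i ≤ j) := by
      intro m hm
      simp only [mem_Iic] at hm
      simp only [mem_filter, mem_univ, true_and]
      exact le_trans (stmt16_S_mono M hm) hj
    have := Finset.card_le_card hsub
    rw [Fin.card_Iic] at this
    omega
  · intro hj
    have hsub : (Finset.univ : Finset (Fin n)).filter (fun m =>
        ∑ i ∈ Finset.univ.filter (fun i : Fin n => i ≤ m), M i ≤ j) ⊆ Finset.Iio k := by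
      intro m hm
      simp only [mem_filter, mem_univ, true_and] at hm
      simp only [mem_Iio]
      by_contra hk
      push_neg at hk
      exact absurd (le_trans (stmt16_S_mono M hk) hm) (not_le.mpr hj)
    have := Finset.card_le_card hsub
    rwa [Fin.card_Iio] at this

theorem stmt16 (n l : ℕ) (hn : 1 ≤ n) (L L' : Fin n → ℕ)
    (hL : ∑ i, L i = l) (hL' : ∑ i, L' i = l) :
    let γ : (Fin n → ℕ) → Fin l → ℕ := fun M j =>
      (Finset.univ.filter (fun m : Fin n =>
        ∑ i ∈ Finset.univ.filter (fun i : Fin n => i ≤ m), M i ≤ (j : ℕ))).card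
    (¬ ∀ m : Fin n, 1 ≤ (m : ℕ) →
        ∑ i ∈ Finset.univ.filter (fun i : Fin n => m ≤ i), L i
          ≤ ∑ i ∈ Finset.univ.filter (fun i : Fin n => m ≤ i), L' i)
    ↔ ∀ σ : Equiv.Perm (Fin l), ∃ j : Fin l, γ L' j < γ L (σ j) := by
  intro γ
  -- prefix sums
  set S : (Fin n → ℕ) → Fin n → ℕ := fun M m =>
    ∑ i ∈ Finset.univ.filter (fun i : Fin n => i ≤ m), M i with hS
  -- split of total sum at m
  have hsplit : ∀ (M : Fin n → ℕ) (m : Fin n),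
      (∑ i ∈ Finset.univ.filter (fun i : Fin n => m ≤ i), M i)
        + (∑ i ∈ Finset.univ.filter (fun i : Fin n => i < m), M i) = ∑ i, M i := by
    intro M m
    rw [← Finset.sum_filter_add_sum_filter_not Finset.univ (fun i : Fin n => m ≤ i) M]
    congr 1
    apply Finset.sum_congr _ (fun _ _ => rfl)
    apply Finset.filter_congr
    intro i _
    simp [not_le]
  have hStot : ∀ (M : Fin n → ℕ) (k : Fin n), S M k ≤ ∑ i, M i := by
    intro M k
    exact Finset.sum_le_sum_of_subset (Finset.filter_subset _ _)
  -- the key equivalence between the condition and prefix-sum domination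
  constructor
  · -- ¬cond → ∀ σ, ∃ j
    intro hcond σ
    by_contra hall
    push_neg at hall
    -- hall : ∀ j, γ L (σ j) ≤ γ L' j
    push_neg at hcond
    obtain ⟨m, hm1, hm⟩ := hcond
    -- get k with S L k < S L' k
    have hmn : (m : ℕ) - 1 < n := lt_of_le_of_lt (Nat.sub_le _ _) m.isLt
    set k : Fin n := ⟨(m : ℕ) - 1, hmn⟩ with hk
    have hltk : ∀ i : Fin n, (i < m) ↔ (i ≤ k) := by
      intro i
      rw [Fin.lt_def, Fin.le_def]
      simp only [hk]
      omega
    have hSLL' : S L k < S L' k := by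
      have h1 := hsplit L m
      have h2 := hsplit L' m
      rw [hL] at h1; rw [hL'] at h2
      have e1 : ∑ i ∈ Finset.univ.filter (fun i : Fin n => i < m), L i = S L k := by
        rw [hS]; congr 1; apply Finset.filter_congr; intro i _; simp [hltk i]
      have e2 : ∑ i ∈ Finset.univ.filter (fun i : Fin n => i < m), L' i = S L' k := by
        rw [hS]; congr 1; apply Finset.filter_congr; intro i _; simp [hltk i]
      omega
    -- pigeonhole
    set T : Finset (Fin l) := Finset.univ.filter (fun j => (j : ℕ) < S L' k) with hT
    have hTcard : T.card = S L' k := stmt16_card_lt l _ (hL' ▸ hStot L' k)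
    have himg : T.image σ ⊆ Finset.univ.filter (fun j : Fin l => (j : ℕ) < S L k) := by
      intro j' hj'
      simp only [Finset.mem_image] at hj'
      obtain ⟨j, hj, rfl⟩ := hj'
      simp only [hT, mem_filter, mem_univ, true_and] at hj ⊢
      have h1 : γ L' j ≤ (k : ℕ) := (stmt16_char L' k j).mpr hj
      have h2 : γ L (σ j) ≤ (k : ℕ) := le_trans (hall j) h1
      exact (stmt16_char L k (σ j)).mp h2
    have := Finset.card_le_card himg
    rw [Finset.card_image_of_injective _ σ.injective, hTcard,
      stmt16_card_lt l _ (hL ▸ hStot L k)] at this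
    omega
  · -- contrapositive: cond → identity works
    intro hB
    intro hcond
    -- cond implies ∀ k, S L' k ≤ S L k
    have hdom : ∀ k : Fin n, S L' k ≤ S L k := by
      intro k
      by_cases hk : (k : ℕ) + 1 < n
      · set m : Fin n := ⟨(k : ℕ) + 1, hk⟩ with hm
        have hm1 : 1 ≤ (m : ℕ) := by simp [hm]
        have h := hcond m hm1
        have hltk : ∀ i : Fin n, (i < m) ↔ (i ≤ k) := by
          intro i
          rw [Fin.lt_def, Fin.le_def]
          simp only [hm]
          omega
        have h1 := hsplit L m
        have h2 := hsplit L' m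
        rw [hL] at h1; rw [hL'] at h2
        have e1 : ∑ i ∈ Finset.univ.filter (fun i : Fin n => i < m), L i = S L k := by
          rw [hS]; congr 1; apply Finset.filter_congr; intro i _; simp [hltk i]
        have e2 : ∑ i ∈ Finset.univ.filter (fun i : Fin n => i < m), L' i = S L' k := by
          rw [hS]; congr 1; apply Finset.filter_congr; intro i _; simp [hltk i]
        omega
      · -- k is the last index: both prefix sums equal l
        have huniv : Finset.univ.filter (fun i : Fin n => i ≤ k) = Finset.univ := by
          apply Finset.filter_true_of_mem
          intro i _
          rw [Fin.le_def]
          omega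
        simp only [hS, huniv, hL, hL']
        exact le_refl l
    -- identity permutation contradicts hB
    obtain ⟨j, hj⟩ := hB 1
    simp only [Equiv.Perm.one_apply] at hj
    -- γ L j ≤ γ L' j since the L-filter set is contained in the L'-filter set
    have : γ L j ≤ γ L' j := by
      apply Finset.card_le_card
      intro m hm
      simp only [mem_filter, mem_univ, true_and] at hm ⊢
      exact le_trans (hdom m) hm
    omega
end
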